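/- arXiv:1610.01987 — 8 statements merged into one kernel-verified Lean document; each statement's English description precedes it below -/
import Mathlib

section
/- For every integer n ≥ 2, the number of arrangements of {1,…,n} avoiding all patterns 12, 23, …, (n−1)n equals D_{n−1} + D_n; that is, d_n = D_{n−1} + D_n. -/
/-!
Split the arrangements of `{1,…,n}` avoiding `12, 23, …, (n-1)n` according to whether they
contain `n1`. Those that do not are counted by `D_n`. In those that do, delete `n`, which sits
just before `1`: the links `a n 1` become `a 1`, so no successor pattern is created, and the
link `a n` was forbidden exactly when `a = n-1`, i.e. exactly when the result would contain
`(n-1)1`. Conversely, inserting `n` right before `1` inverts the deletion, so these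
arrangements are counted by `D_{n-1}`.
-/

/-- The arrangement (one-line notation) of `σ` avoids all patterns
`12, 23, …, (n-1)n`: digit `i` (encoded as the value `i-1` in `Fin n`)
is never immediately followed by digit `i+1`. -/
def avoidsSucc (n : ℕ) (σ : Equiv.Perm (Fin n)) : Prop :=
  ∀ (k : ℕ) (h : k + 1 < n),
    (σ ⟨k + 1, h⟩).val ≠ (σ ⟨k, Nat.lt_of_succ_lt h⟩).val + 1

/-- The arrangement of `σ` contains the pattern `n1`: digit `n` (value `n-1`)
is immediately followed by digit `1` (value `0`). -/
def containsN1 (n : ℕ) (σ : Equiv.Perm (Fin n)) : Prop :=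
  ∃ (k : ℕ) (h : k + 1 < n),
    (σ ⟨k, Nat.lt_of_succ_lt h⟩).val = n - 1 ∧ (σ ⟨k + 1, h⟩).val = 0

/-- `dCount n` = number of arrangements of `{1,…,n}` avoiding `12, 23, …, (n-1)n`. -/
noncomputable def dCount (n : ℕ) : ℕ :=
  Nat.card {σ : Equiv.Perm (Fin n) // avoidsSucc n σ}

/-- `DCount n` = number of arrangements of `{1,…,n}` avoiding `12, 23, …, (n-1)n, n1`. -/
noncomputable def DCount (n : ℕ) : ℕ :=
  Nat.card {σ : Equiv.Perm (Fin n) // avoidsSucc n σ ∧ ¬ containsN1 n σ}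

open Equiv

namespace Fin

lemma val_succAbove {n : ℕ} (j : Fin (n + 1)) (p : Fin n) :
    (j.succAbove p).val = if p.val < j.val then p.val else p.val + 1 := by
  unfold succAbove
  split_ifs <;> simp_all [Fin.lt_def]

end Fin

lemma optionCongr_removeNone {α β : Type*} {e : Option α ≃ Option β} (h : e none = none) :
    e.removeNone.optionCongr = e := by
  ext1 x
  cases x with
  | none => simpa using h.symm
  | some x =>
    obtain ⟨y, hy⟩ := Option.ne_none_iff_exists'.mp
      fun hx => Option.some_ne_none x (e.injective (hx.trans h.symm))
    exact removeNone_some e ⟨y, hy⟩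

lemma card_subtype_eq_card_and_add_card_and_not {α : Type*} [Finite α] (p q : α → Prop) :
    Nat.card {x // p x} = Nat.card {x // p x ∧ q x} + Nat.card {x // p x ∧ ¬ q x} := by
  classical
  rw [← Nat.card_sum]
  exact Nat.card_congr <| (sumCompl fun x : {x // p x} => q x).symm.trans <|
    sumCongr (subtypeSubtypeEquivSubtypeInter p q)
      (subtypeSubtypeEquivSubtypeInter p fun x => ¬ q x)

variable {n : ℕ}

def Precedes (σ : Perm (Fin n)) (a b : Fin n) : Prop :=
  (σ.symm b).val = (σ.symm a).val + 1

lemma exists_adjacent_iff_exists_precedes (σ : Perm (Fin n)) (P : Fin n → Fin n → Prop) :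
    (∃ (k : ℕ) (h : k + 1 < n), P (σ ⟨k, Nat.lt_of_succ_lt h⟩) (σ ⟨k + 1, h⟩)) ↔
      ∃ a b, Precedes σ a b ∧ P a b := by
  constructor
  · rintro ⟨k, hk, hP⟩
    exact ⟨_, _, by simp [Precedes], hP⟩
  · rintro ⟨a, b, hab, hP⟩
    have hb : σ.symm b = ⟨(σ.symm a).val + 1, hab ▸ (σ.symm b).isLt⟩ := Fin.ext hab
    refine ⟨(σ.symm a).val, hab ▸ (σ.symm b).isLt, ?_⟩
    rwa [← hb, Fin.eta, σ.apply_symm_apply, σ.apply_symm_apply]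

lemma avoidsSucc_iff_precedes (σ : Perm (Fin n)) :
    avoidsSucc n σ ↔ ∀ a b, Precedes σ a b → b.val ≠ a.val + 1 := by
  simpa only [avoidsSucc, not_exists, not_and] using
    (exists_adjacent_iff_exists_precedes σ fun a b => b.val = a.val + 1).not

lemma containsN1_iff_precedes (σ : Perm (Fin (n + 1))) :
    containsN1 (n + 1) σ ↔ Precedes σ (Fin.last n) 0 := by
  rw [containsN1,
    exists_adjacent_iff_exists_precedes σ fun a b => a.val = n + 1 - 1 ∧ b.val = 0]
  constructor
  · rintro ⟨a, b, hab, ha, hb⟩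
    rwa [show a = Fin.last n from Fin.ext ha, show b = 0 from Fin.ext hb] at hab
  · exact fun h => ⟨_, _, h, rfl, rfl⟩

/-- The one-line word of `τ` with the new largest value inserted at position `j`. -/
def insertMax (j : Fin (n + 1)) (τ : Perm (Fin n)) : Perm (Fin (n + 1)) :=
  (finSuccEquiv' j).trans (τ.optionCongr.trans (finSuccEquiv' (Fin.last n)).symm)

@[simp]
lemma insertMax_symm_last (j : Fin (n + 1)) (τ : Perm (Fin n)) :
    (insertMax j τ).symm (Fin.last n) = j := by
  simp [insertMax, ← optionCongr_symm]

@[simp]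
lemma insertMax_symm_castSucc (j : Fin (n + 1)) (τ : Perm (Fin n)) (v : Fin n) :
    (insertMax j τ).symm v.castSucc = j.succAbove (τ.symm v) := by
  simp [insertMax, ← optionCongr_symm, finSuccEquiv'_last_apply_castSucc]

def deleteMax (σ : Perm (Fin (n + 1))) : Perm (Fin n) :=
  removeNone <|
    (finSuccEquiv' (σ.symm (Fin.last n))).symm.trans (σ.trans (finSuccEquiv' (Fin.last n)))

lemma deleteMax_insertMax (j : Fin (n + 1)) (τ : Perm (Fin n)) :
    deleteMax (insertMax j τ) = τ := by
  rw [deleteMax, insertMax_symm_last]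
  simp only [insertMax, trans_assoc, symm_trans_self, trans_refl]
  rw [← trans_assoc, symm_trans_self, refl_trans, removeNone_optionCongr]

lemma insertMax_deleteMax (σ : Perm (Fin (n + 1))) :
    insertMax (σ.symm (Fin.last n)) (deleteMax σ) = σ := by
  rw [insertMax, deleteMax, optionCongr_removeNone (by simp)]
  ext; simp

section InsertBeforeZero

variable (τ : Perm (Fin (n + 1)))

lemma precedes_insertMax_castSucc_castSucc (a b : Fin (n + 1)) :
    Precedes (insertMax (τ.symm 0).castSucc τ) a.castSucc b.castSucc ↔
      Precedes τ a b ∧ b ≠ 0 := by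
  have hb : b ≠ 0 ↔ (τ.symm b).val ≠ (τ.symm 0).val := by
    rw [Ne, Fin.val_inj.ne, τ.symm.injective.ne_iff]
  simp only [Precedes, insertMax_symm_castSucc, Fin.val_succAbove, Fin.val_castSucc, hb]
  split_ifs <;> omega

lemma precedes_insertMax_castSucc_last (a : Fin (n + 1)) :
    Precedes (insertMax (τ.symm 0).castSucc τ) a.castSucc (Fin.last _) ↔ Precedes τ a 0 := by
  simp only [Precedes, insertMax_symm_castSucc, insertMax_symm_last, Fin.val_succAbove,
    Fin.val_castSucc]
  split_ifs <;> omega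

end InsertBeforeZero

lemma containsN1_insertMax_iff (j : Fin (n + 2)) (τ : Perm (Fin (n + 1))) :
    containsN1 (n + 2) (insertMax j τ) ↔ j = (τ.symm 0).castSucc := by
  rw [containsN1_iff_precedes, Fin.ext_iff]
  simp only [Precedes, insertMax_symm_last, ← Fin.castSucc_zero, insertMax_symm_castSucc,
    Fin.val_succAbove, Fin.val_castSucc]
  split_ifs <;> omega

lemma avoidsSucc_insertMax_iff (τ : Perm (Fin (n + 1))) :
    avoidsSucc (n + 2) (insertMax (τ.symm 0).castSucc τ) ↔
      avoidsSucc (n + 1) τ ∧ ¬ containsN1 (n + 1) τ := by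
  simp only [avoidsSucc_iff_precedes, containsN1_iff_precedes]
  refine ⟨fun h => ⟨fun a b hab hba => ?_, fun h0 => ?_⟩, fun ⟨hτ, h0⟩ a' b' hab => ?_⟩
  · have hb : b ≠ 0 := fun hb0 => by simp [hb0] at hba
    exact h _ _ ((precedes_insertMax_castSucc_castSucc τ a b).2 ⟨hab, hb⟩) (by simpa)
  · exact h _ _ ((precedes_insertMax_castSucc_last τ _).2 h0) (by simp)
  · intro hba
    cases a' using Fin.lastCases with
    | last =>
      simp only [Fin.val_last] at hba
      omega
    | cast a =>
      cases b' using Fin.lastCases with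
      | last =>
        obtain rfl : a = Fin.last n := Fin.ext <| by
          simp only [Fin.val_last, Fin.val_castSucc] at hba ⊢
          omega
        exact h0 ((precedes_insertMax_castSucc_last τ _).1 hab)
      | cast b =>
        exact hτ a b ((precedes_insertMax_castSucc_castSucc τ a b).1 hab).1 (by simpa using hba)

lemma avoidsSucc_and_containsN1_insertMax_iff (j : Fin (n + 2)) (τ : Perm (Fin (n + 1))) :
    avoidsSucc (n + 2) (insertMax j τ) ∧ containsN1 (n + 2) (insertMax j τ) ↔
      j = (τ.symm 0).castSucc ∧ avoidsSucc (n + 1) τ ∧ ¬ containsN1 (n + 1) τ := by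
  rw [and_comm, containsN1_insertMax_iff]
  exact and_congr_right fun h => h ▸ avoidsSucc_insertMax_iff τ

lemma deleteMax_spec {σ : Perm (Fin (n + 2))}
    (h : avoidsSucc (n + 2) σ ∧ containsN1 (n + 2) σ) :
    σ.symm (Fin.last _) = ((deleteMax σ).symm 0).castSucc ∧
      avoidsSucc (n + 1) (deleteMax σ) ∧ ¬ containsN1 (n + 1) (deleteMax σ) :=
  (avoidsSucc_and_containsN1_insertMax_iff _ _).1 (by rwa [insertMax_deleteMax])

def deleteMaxEquiv :
    {σ : Perm (Fin (n + 2)) // avoidsSucc (n + 2) σ ∧ containsN1 (n + 2) σ} ≃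
      {τ : Perm (Fin (n + 1)) // avoidsSucc (n + 1) τ ∧ ¬ containsN1 (n + 1) τ} where
  toFun σ := ⟨deleteMax σ, (deleteMax_spec σ.2).2⟩
  invFun τ := ⟨insertMax (τ.1.symm 0).castSucc τ,
    (avoidsSucc_and_containsN1_insertMax_iff _ _).2 ⟨rfl, τ.2⟩⟩
  left_inv σ := Subtype.ext <| by
    dsimp only
    rw [← (deleteMax_spec σ.2).1, insertMax_deleteMax]
  right_inv τ := Subtype.ext (deleteMax_insertMax _ τ.1)

theorem stmt_0 (n : ℕ) (hn : 2 ≤ n) :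
    dCount n = DCount (n - 1) + DCount n := by
  obtain ⟨m, rfl⟩ : ∃ m, n = m + 2 := ⟨n - 2, by omega⟩
  rw [dCount, DCount, DCount, card_subtype_eq_card_and_add_card_and_not _ (containsN1 (m + 2)),
    Nat.card_congr deleteMaxEquiv]
  rfl
end

section
/- For every integer n ≥ 1, D_n = Der_n + (−1)^{n−1}, as an identity in the integers. -/
/-!
Write `τ = σ⁻¹`, so that `τ v` is the position of the value `v`. The forbidden patterns say
exactly that `τ (v + 1) ≠ τ v + 1` for every `v` of `ℤ/n` (`finRotate`). By inclusion–exclusion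
over the set `t` of adjacencies `v, v + 1` that are imposed, `D_n` is an alternating sum of
counts of arrangements with imposed adjacencies. For `t` a proper subset the imposed adjacencies
glue the values into `n - #t` blocks, arranged in `(n - #t)!` ways: this is also the number of
permutations fixing `t` pointwise, the corresponding term for derangements. For `t` everything
the adjacencies form a cycle and no arrangement exists. So the two sums differ only at `t = univ`,
by `(-1) ^ n * (0 - 0!)`.
-/

open Finset Equiv

namespace Fin

lemma val_finRotate {n : ℕ} (i : Fin n) :
    (finRotate n i : ℕ) = if (i : ℕ) + 1 = n then (0 : ℕ) else i + 1 := by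
  cases n with
  | zero => exact i.elim0
  | succ n => rw [coe_finRotate]; simp [Fin.ext_iff]

lemma val_succ_succAbove {N : ℕ} (j x : Fin N) :
    (j.succ.succAbove x : ℕ) = if x ≤ j then (x : ℕ) else x + 1 := by
  split_ifs with h
  · rw [succAbove_succ_of_le _ _ h, val_castSucc]
  · rw [succAbove_succ_of_lt _ _ (not_le.mp h), val_succ]

lemma val_succ_succAbove_eq_add_one_iff {N : ℕ} {j x y : Fin N} (hx : x ≠ j) :
    (j.succ.succAbove y : ℕ) = j.succ.succAbove x + 1 ↔ (y : ℕ) = x + 1 := by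
  have hx' : (x : ℕ) ≠ j := Fin.val_ne_of_ne hx
  rw [val_succ_succAbove, val_succ_succAbove]
  simp only [le_def]
  split_ifs <;> omega

lemma eq_succ_of_val_eq_succAbove_add_one {N : ℕ} {q : Fin (N + 1)} {j : Fin N}
    (h : (q : ℕ) = q.succAbove j + 1) : q = j.succ := by
  rcases lt_or_ge j.castSucc q with hjq | hqj
  · rw [succAbove_of_castSucc_lt _ _ hjq] at h
    exact Fin.ext (by simpa using h)
  · rw [succAbove_of_le_castSucc _ _ hqj] at h
    simp only [val_succ, le_def, val_castSucc] at h hqj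
    omega

end Fin

variable {α : Type*}

def Glued (f : α → α) (S : Finset α) {N : ℕ} (e : α ≃ Fin N) : Prop :=
  ∀ a ∈ S, (e (f a) : ℕ) = e a + 1

def AcyclicOn (f : α → α) (S : Finset α) : Prop :=
  ∀ T ⊆ S, T.Nonempty → ∃ a ∈ T, f a ∉ T

section Removal

variable {N : ℕ} {p : α}

def restrictAt (p : α) (e : α ≃ Fin (N + 1)) : {x // x ≠ p} ≃ Fin N :=
  (e.subtypeEquiv (q := (· ≠ e p)) fun _ => e.injective.ne_iff.symm).trans
    (finSuccAboveEquiv (e p)).symm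

lemma succAbove_restrictAt (e : α ≃ Fin (N + 1)) (x : {x // x ≠ p}) :
    (e p).succAbove (restrictAt p e x) = e x :=
  congrArg Subtype.val ((finSuccAboveEquiv (e p)).apply_symm_apply ⟨e x, e.injective.ne x.2⟩)

variable [DecidableEq α]

def extendAt (p : α) (q : Fin (N + 1)) (e : {x // x ≠ p} ≃ Fin N) : α ≃ Fin (N + 1) :=
  (optionSubtypeNe p).symm.trans (e.optionCongr.trans (finSuccEquiv' q).symm)

@[simp]
lemma extendAt_self (q : Fin (N + 1)) (e : {x // x ≠ p} ≃ Fin N) : extendAt p q e p = q := by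
  simp [extendAt]

lemma extendAt_of_ne (q : Fin (N + 1)) (e : {x // x ≠ p} ≃ Fin N) {x : α} (hx : x ≠ p) :
    extendAt p q e x = q.succAbove (e ⟨x, hx⟩) := by
  simp [extendAt, hx]

lemma extendAt_restrictAt (e : α ≃ Fin (N + 1)) : extendAt p (e p) (restrictAt p e) = e := by
  ext x
  by_cases hx : x = p
  · subst hx; simp
  · rw [extendAt_of_ne _ _ hx, succAbove_restrictAt]

lemma restrictAt_extendAt (q : Fin (N + 1)) (e : {x // x ≠ p} ≃ Fin N) :
    restrictAt p (extendAt p q e) = e := by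
  ext x
  have h := succAbove_restrictAt (extendAt p q e) x
  rw [extendAt_of_ne _ _ x.2, extendAt_self] at h
  exact congrArg Fin.val (Fin.succAbove_right_injective h)

/-- Junk value at `x` when `f x = p`; among the arrows that are kept this never happens. -/
def restrictSucc (f : α → α) (p : α) (x : {x // x ≠ p}) : {x // x ≠ p} :=
  if h : f x = p then x else ⟨f x, h⟩

variable {f : α → α} {S : Finset α} {i : α}

lemma val_restrictSucc (hf : Set.InjOn f S) (hi : i ∈ S) (hp : f i = p) {a : {x // x ≠ p}}
    (ha : a ∈ (S.erase i).subtype (· ≠ p)) : (restrictSucc f p a : α) = f a := by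
  obtain ⟨hai, haS⟩ := mem_erase.mp (mem_subtype.mp ha)
  rw [restrictSucc, dif_neg fun h => hai (hf haS hi (h.trans hp.symm))]

lemma glued_extendAt_iff (hf : Set.InjOn f S) (hi : i ∈ S) (hp : f i = p) (hpS : p ∉ S)
    (e : {x // x ≠ p} ≃ Fin N) :
    Glued f S (extendAt p (e ⟨i, ne_of_mem_of_not_mem hi hpS⟩).succ e) ↔
      Glued (restrictSucc f p) ((S.erase i).subtype (· ≠ p)) e := by
  set i' : {x // x ≠ p} := ⟨i, ne_of_mem_of_not_mem hi hpS⟩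
  have glued_at_i : (extendAt p (e i').succ e (f i) : ℕ) = extendAt p (e i').succ e i + 1 := by
    rw [hp, extendAt_self, extendAt_of_ne _ _ i'.2, Fin.succAbove_succ_self]
    rfl
  have glued_at_ne : ∀ a ∈ (S.erase i).subtype (· ≠ p),
      ((extendAt p (e i').succ e (f a) : ℕ) = extendAt p (e i').succ e a + 1 ↔
        (e (restrictSucc f p a) : ℕ) = e a + 1) := by
    intro a ha
    rw [← val_restrictSucc hf hi hp ha, extendAt_of_ne _ _ (restrictSucc f p a).2,
      extendAt_of_ne _ _ a.2, Fin.val_succ_succAbove_eq_add_one_iff]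
    exact fun h => (mem_erase.mp (mem_subtype.mp ha)).1 (congrArg Subtype.val (e.injective h))
  constructor
  · intro h a ha
    exact (glued_at_ne a ha).mp (h a (mem_erase.mp (mem_subtype.mp ha)).2)
  · intro h a ha
    by_cases hai : a = i
    · subst hai; exact glued_at_i
    · have ha' : (⟨a, ne_of_mem_of_not_mem ha hpS⟩ : {x // x ≠ p}) ∈
          (S.erase i).subtype (· ≠ p) := mem_subtype.mpr (mem_erase.mpr ⟨hai, ha⟩)
      exact (glued_at_ne _ ha').mpr (h _ ha')

/-- Since `p = f i` must sit right after `i`, deleting `p` from the arrangement loses nothing. -/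
lemma card_glued_eq_card_glued_restrictSucc (hf : Set.InjOn f S) (hi : i ∈ S) (hp : f i = p)
    (hpS : p ∉ S) :
    Nat.card {e : α ≃ Fin (N + 1) // Glued f S e} =
      Nat.card {e : {x // x ≠ p} ≃ Fin N //
        Glued (restrictSucc f p) ((S.erase i).subtype (· ≠ p)) e} := by
  set i' : {x // x ≠ p} := ⟨i, ne_of_mem_of_not_mem hi hpS⟩
  symm
  refine Nat.card_congr (Equiv.ofBijective
    (fun e => ⟨extendAt p (e.1 i').succ e.1, (glued_extendAt_iff hf hi hp hpS e.1).mpr e.2⟩)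
    ⟨fun e₁ e₂ h => ?_, fun e => ?_⟩)
  · have h' := congrArg (restrictAt p ∘ Subtype.val) h
    simp only [Function.comp_apply, restrictAt_extendAt] at h'
    exact Subtype.ext h'
  · have hq : (restrictAt p e.1 i').succ = e.1 p := by
      refine (Fin.eq_succ_of_val_eq_succAbove_add_one ?_).symm
      have h := e.2 i hi
      rw [hp] at h
      rwa [succAbove_restrictAt]
    have he : extendAt p (restrictAt p e.1 i').succ (restrictAt p e.1) = e.1 := by
      rw [hq, extendAt_restrictAt]
    refine ⟨⟨restrictAt p e.1, (glued_extendAt_iff hf hi hp hpS _).mp ?_⟩, Subtype.ext he⟩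
    show Glued f S (extendAt p (restrictAt p e.1 i').succ (restrictAt p e.1))
    rw [he]
    exact e.2

lemma injOn_restrictSucc (hf : Set.InjOn f S) (hi : i ∈ S) (hp : f i = p) :
    Set.InjOn (restrictSucc f p) ((S.erase i).subtype (· ≠ p) : Set {x // x ≠ p}) := by
  intro a ha b hb h
  have h' := congrArg Subtype.val h
  rw [val_restrictSucc hf hi hp ha, val_restrictSucc hf hi hp hb] at h'
  exact Subtype.ext
    (hf (mem_erase.mp (mem_subtype.mp ha)).2 (mem_erase.mp (mem_subtype.mp hb)).2 h')

lemma acyclicOn_restrictSucc (hf : Set.InjOn f S) (hi : i ∈ S) (hp : f i = p)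
    (hS : AcyclicOn f S) : AcyclicOn (restrictSucc f p) ((S.erase i).subtype (· ≠ p)) := by
  intro T hT hTne
  obtain ⟨a, haT, hfa⟩ := hS (T.map (Function.Embedding.subtype _))
    (fun x hx => by
      obtain ⟨y, hy, rfl⟩ := mem_map.mp hx
      exact (mem_erase.mp (mem_subtype.mp (hT hy))).2)
    (hTne.map)
  obtain ⟨x, hxT, rfl⟩ := mem_map.mp haT
  refine ⟨x, hxT, fun hfx => hfa ?_⟩
  have := mem_map_of_mem (Function.Embedding.subtype _) hfx
  rwa [Function.Embedding.subtype_apply, val_restrictSucc hf hi hp (hT hxT)] at this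

end Removal

theorem card_glued [Fintype α] (f : α → α) (S : Finset α) (hf : Set.InjOn f S)
    (hS : AcyclicOn f S) {N : ℕ} (hN : Fintype.card α = N) :
    Nat.card {e : α ≃ Fin N // Glued f S e} = (N - #S).factorial := by
  classical
  obtain ⟨k, hk⟩ : ∃ k, #S = k := ⟨_, rfl⟩
  induction k generalizing α N with
  | zero =>
    rw [card_eq_zero.mp hk, Nat.card_congr (Equiv.subtypeUnivEquiv (p := Glued f ∅)
        fun _ a ha => absurd ha (notMem_empty a)),
      Nat.card_eq_fintype_card, Fintype.card_equiv (Fintype.equivFinOfCardEq hN), hN, card_empty,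
      Nat.sub_zero]
  | succ k ih =>
    obtain ⟨i, hi, hpS⟩ := hS S subset_rfl (card_pos.mp (by omega))
    obtain ⟨N, rfl⟩ : ∃ N', N = N' + 1 :=
      Nat.exists_eq_add_one.mpr (hN ▸ Fintype.card_pos_iff.mpr ⟨i⟩)
    have hcard : Fintype.card {x // x ≠ f i} = N := by
      have := Fintype.card_congr (optionSubtypeNe (f i))
      rw [Fintype.card_option] at this
      omega
    have hcardS : #((S.erase i).subtype (· ≠ f i)) = k := by
      rw [card_subtype,
        filter_true_of_mem fun x hx => ne_of_mem_of_not_mem (mem_of_mem_erase hx) hpS,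
        card_erase_of_mem hi, hk, Nat.add_sub_cancel]
    rw [card_glued_eq_card_glued_restrictSucc hf hi rfl hpS,
      ih _ _ (injOn_restrictSucc hf hi rfl) (acyclicOn_restrictSucc hf hi rfl hS) hcard hcardS,
      hcardS, hk, Nat.add_sub_add_right]

lemma not_glued_univ [Fintype α] [Nonempty α] (f : α → α) {N : ℕ} (e : α ≃ Fin N) :
    ¬ Glued f univ e := by
  intro h
  obtain ⟨N, rfl⟩ := Nat.exists_eq_add_one.mpr (Fin.pos (e (Classical.arbitrary α)))
  have hlast := h (e.symm (Fin.last N)) (mem_univ _)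
  rw [apply_symm_apply, Fin.val_last] at hlast
  exact (e (f (e.symm (Fin.last N)))).isLt.ne hlast

open Fin.NatCast in
lemma acyclicOn_finRotate {n : ℕ} {S : Finset (Fin n)} (hS : S ≠ univ) :
    AcyclicOn (finRotate n) S := by
  intro T hTS ⟨a, ha⟩
  by_contra! hclosed
  cases n with
  | zero => exact a.elim0
  | succ n =>
    have orbit : ∀ k : ℕ, a + (k : Fin (n + 1)) ∈ T := by
      intro k
      induction k with
      | zero => simpa using ha
      | succ k ih => simpa [← add_assoc, finRotate_apply] using hclosed _ ih
    refine hS (eq_univ_of_forall fun x => hTS ?_)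
    simpa using orbit (x - a).val

lemma card_fixing [Fintype α] (t : Finset α) :
    Nat.card {σ : Perm α // ∀ a ∈ t, σ a = a} = (Fintype.card α - #t).factorial := by
  classical
  rw [← Nat.card_congr ((Perm.subtypeEquivSubtypePerm (· ∉ t)).trans
    (subtypeEquivRight fun σ => by simp only [not_not])), Nat.card_perm, Nat.card_eq_fintype_card,
    Fintype.card_subtype_compl, Fintype.card_coe]

lemma card_forall_not_eq_sum_powerset {ι β : Type*} [Fintype ι] [Finite β] (P : ι → β → Prop) :
    (Nat.card {b // ∀ i, ¬ P i b} : ℤ) =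
      ∑ t ∈ (univ : Finset ι).powerset, (-1 : ℤ) ^ #t * Nat.card {b // ∀ i ∈ t, P i b} := by
  classical
  have := Fintype.ofFinite β
  simp only [Nat.card_eq_fintype_card, Fintype.card_subtype]
  convert inclusion_exclusion_card_inf_compl univ (fun i => ({b | P i b} : Finset β)) using 3
  · ext b; simp [mem_inf]
  · congr 2; ext b; simp [mem_inf]

lemma exists_adjacent_iff {n : ℕ} (σ : Perm (Fin n)) (g : Fin n → Fin n) :
    (∃ (k : ℕ) (h : k + 1 < n), σ ⟨k + 1, h⟩ = g (σ ⟨k, Nat.lt_of_succ_lt h⟩)) ↔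
      ∃ i, (σ⁻¹ (g i) : ℕ) = σ⁻¹ i + 1 := by
  simp only [Perm.inv_def]
  constructor
  · rintro ⟨k, hk, h⟩
    refine ⟨σ ⟨k, Nat.lt_of_succ_lt hk⟩, ?_⟩
    rw [← h, symm_apply_apply, symm_apply_apply]
  · rintro ⟨i, h⟩
    have hk : (σ.symm i : ℕ) + 1 < n := h ▸ (σ.symm (g i)).isLt
    refine ⟨σ.symm i, hk, ?_⟩
    rw [Fin.eta, apply_symm_apply, ← apply_symm_apply σ (g i)]
    exact congrArg σ (Fin.ext h.symm)

lemma avoidsSucc_and_not_containsN1_iff {n : ℕ} (σ : Perm (Fin n)) :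
    avoidsSucc n σ ∧ ¬ containsN1 n σ ↔
      ∀ i, ¬ (σ⁻¹ (finRotate n i) : ℕ) = σ⁻¹ i + 1 := by
  rw [← not_exists, ← exists_adjacent_iff]
  simp only [avoidsSucc, containsN1, not_exists, not_and, ← forall_and]
  refine forall_congr' fun k => forall_congr' fun hk => ?_
  rw [Fin.ext_iff, Fin.val_finRotate]
  have := (σ ⟨k + 1, hk⟩).isLt
  split_ifs <;> omega

lemma dCount_eq_sum_powerset {n : ℕ} (hn : 1 ≤ n) :
    (DCount n : ℤ) = ∑ t ∈ (univ : Finset (Fin n)).powerset,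
      (-1) ^ #t * if t = univ then 0 else ((n - #t).factorial : ℤ) := by
  rw [DCount, Nat.card_congr (subtypeEquiv (Equiv.inv _) avoidsSucc_and_not_containsN1_iff
      (q := fun τ => ∀ i, ¬ (τ (finRotate n i) : ℕ) = τ i + 1)),
    card_forall_not_eq_sum_powerset]
  refine sum_congr rfl fun t _ => congrArg _ ?_
  split_ifs with ht
  · subst ht
    have : Nonempty (Fin n) := ⟨⟨0, hn⟩⟩
    rw [Nat.cast_eq_zero, Nat.card_eq_zero]
    exact Or.inl ⟨fun τ => not_glued_univ (finRotate n) τ.1 τ.2⟩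
  · exact_mod_cast card_glued _ t (finRotate n).injective.injOn (acyclicOn_finRotate ht)
      (Fintype.card_fin n)

lemma numDerangements_eq_sum_powerset (n : ℕ) :
    (numDerangements n : ℤ) = ∑ t ∈ (univ : Finset (Fin n)).powerset,
      (-1) ^ #t * ((n - #t).factorial : ℤ) := by
  have := card_derangements_eq_numDerangements (Fin n)
  rw [Fintype.card_fin, ← Nat.card_eq_fintype_card] at this
  rw [← this, derangements, Set.coe_ofPred, card_forall_not_eq_sum_powerset]
  simp only [card_fixing, Fintype.card_fin]

theorem stmt_4 (n : ℕ) (hn : 1 ≤ n) :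
    (DCount n : ℤ) = (numDerangements n : ℤ) + (-1 : ℤ) ^ (n - 1) := by
  have hdiff : (DCount n : ℤ) - numDerangements n = (-1) ^ n * (0 - 1) := by
    rw [dCount_eq_sum_powerset hn, numDerangements_eq_sum_powerset, ← sum_sub_distrib,
      sum_eq_single_of_mem univ (mem_powerset_self _)]
    · simp
    · intro t _ ht
      rw [if_neg ht, sub_self]
  obtain ⟨m, rfl⟩ := Nat.exists_eq_add_one.mpr hn
  rw [Nat.add_sub_cancel, pow_succ] at *
  linarith
end

section
/- For every integer n ≥ 1, D_n = Σ_{k=0}^{n−1} (−1)^k · n!/k!, as an identity in the integers (the usual derangement sum with the last term (−1)^n omitted). -/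
/-!
Read an arrangement `σ` through `g = σ⁻¹` (value ↦ position). The forbidden patterns say exactly
that for no `i ∈ ℤ/n` is value `i + 1` placed right after value `i`, so by inclusion–exclusion it
suffices to count, for `S ⊆ ℤ/n`, the `g` in which `i + 1` follows `i` for every `i ∈ S`. For
`S = ℤ/n` there are none, since nothing can follow the value in the last position. Otherwise there
are `(n - |S|)!`: rotate the values so that some `i ∈ S` with `i + 1 ∉ S` becomes the last value and
`i + 1` becomes `0`; deleting the value `0`, which is glued right after the last value, is then a
bijection onto the same problem with `n - 1` values and `|S| - 1` links. Grouping the sets `S` by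
size gives `∑_{k < n} (-1)^k C(n, k) (n - k)! = ∑_{k < n} (-1)^k n!/k!`.
-/

open Finset

namespace Fin

theorem val_succAbove_eq_val_succAbove_add_one_iff {m : ℕ} {p : Fin (m + 1)} {x y : Fin m}
    (h : (x : ℕ) + 1 ≠ p) : (p.succAbove y : ℕ) = p.succAbove x + 1 ↔ (y : ℕ) = x + 1 := by
  rcases lt_or_ge x.castSucc p with hx | hx <;> rcases lt_or_ge y.castSucc p with hy | hy <;>
    simp_all [succAbove_of_castSucc_lt, succAbove_of_le_castSucc, lt_def, le_def] <;> omega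

theorem val_succAbove_add_one_eq_iff {m : ℕ} {p : Fin (m + 1)} {x : Fin m} :
    (p.succAbove x : ℕ) + 1 = p ↔ p = x.succ := by
  rcases lt_or_ge x.castSucc p with hx | hx <;>
    simp_all [succAbove_of_castSucc_lt, succAbove_of_le_castSucc, lt_def, le_def, Fin.ext_iff] <;>
    omega

theorem eq_add_one_iff {n : ℕ} [NeZero n] {a b : Fin n} :
    b = a + 1 ↔ (b : ℕ) = a + 1 ∨ (a : ℕ) = n - 1 ∧ (b : ℕ) = 0 := by
  obtain ⟨m, rfl⟩ := Nat.exists_eq_add_one_of_ne_zero (NeZero.ne n)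
  rw [Fin.ext_iff, val_add_one]
  split_ifs with h <;> simp [Fin.ext_iff] at h <;> omega

open Fin.NatCast in
theorem exists_mem_add_one_notMem {n : ℕ} [NeZero n] {S : Finset (Fin n)} (hne : S.Nonempty)
    (hS : S ≠ univ) : ∃ i ∈ S, i + 1 ∉ S := by
  by_contra! h
  obtain ⟨i, hi⟩ := hne
  have hiter (k : ℕ) : i + (k : Fin n) ∈ S := by
    induction k with
    | zero => simpa using hi
    | succ k ih => simpa [add_assoc] using h _ ih
  exact hS (eq_univ_of_forall fun j => by simpa using hiter (j - i).val)

theorem card_filter_univ_succ_mem {m : ℕ} {S : Finset (Fin (m + 1))} (h0 : 0 ∉ S) :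
    #({j | j.succ ∈ S} : Finset (Fin m)) = #S := by
  simpa [h0] using (card_filter_univ_succ (· ∈ S)).symm

end Fin

theorem Nat.choose_mul_factorial_sub_eq_factorial_div {n k : ℕ} (h : k ≤ n) :
    n.choose k * (n - k).factorial = n.factorial / k.factorial :=
  (Nat.div_eq_of_eq_mul_left k.factorial_pos
    (by rw [← Nat.choose_mul_factorial_mul_factorial h]; ring)).symm

namespace Equiv.Perm

variable {n m : ℕ} [NeZero n]

/-- For `g` read as value ↦ position: value `i + 1` (cyclically) sits right after value `i`. -/
def IsLinkedAt (g : Perm (Fin n)) (i : Fin n) : Prop :=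
  (g (i + 1) : ℕ) = g i + 1

instance (g : Perm (Fin n)) (i : Fin n) : Decidable (g.IsLinkedAt i) :=
  inferInstanceAs (Decidable (_ = _))

def linkedPerms (S : Finset (Fin n)) : Finset (Perm (Fin n)) :=
  {g | ∀ i ∈ S, g.IsLinkedAt i}

theorem mem_linkedPerms {S : Finset (Fin n)} {g : Perm (Fin n)} :
    g ∈ linkedPerms S ↔ ∀ i ∈ S, g.IsLinkedAt i := by
  simp [linkedPerms]

theorem linkedPerms_empty : linkedPerms (∅ : Finset (Fin n)) = univ := by
  simp [linkedPerms]

theorem linkedPerms_univ : linkedPerms (univ : Finset (Fin n)) = ∅ := by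
  refine eq_empty_of_forall_notMem fun g hg => ?_
  obtain ⟨i, hi⟩ : ∃ i, (g i : ℕ) = n - 1 :=
    ⟨g.symm ⟨n - 1, Nat.sub_one_lt (NeZero.ne n)⟩, by simp⟩
  have hlink : (g (i + 1) : ℕ) = g i + 1 := mem_linkedPerms.1 hg i (mem_univ i)
  have := (g (i + 1)).isLt
  omega

theorem isLinkedAt_mul_addRight {g : Perm (Fin n)} {c i : Fin n} :
    (g * Equiv.addRight c).IsLinkedAt i ↔ g.IsLinkedAt (i + c) := by
  simp [IsLinkedAt, add_right_comm]

theorem card_linkedPerms_map_addRight (S : Finset (Fin n)) (c : Fin n) :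
    #(linkedPerms (S.map (Equiv.addRight c).toEmbedding)) = #(linkedPerms S) :=
  card_equiv (Equiv.mulRight (Equiv.addRight c)) fun g => by
    simp only [mem_linkedPerms, forall_mem_map, coe_mulRight, isLinkedAt_mul_addRight,
      coe_toEmbedding, coe_addRight]

theorem isLinkedAt_inv_iff {σ : Perm (Fin n)} {i : Fin n} :
    σ⁻¹.IsLinkedAt i ↔ ∃ k, ∃ h : k + 1 < n, σ ⟨k, by omega⟩ = i ∧ σ ⟨k + 1, h⟩ = i + 1 := by
  constructor
  · intro h
    refine ⟨σ⁻¹ i, h ▸ (σ⁻¹ (i + 1)).isLt, by simp, ?_⟩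
    rw [show (⟨(σ⁻¹ i : ℕ) + 1, _⟩ : Fin n) = σ⁻¹ (i + 1) from Fin.ext h.symm]
    simp
  · rintro ⟨k, hk, rfl, h⟩
    simp [IsLinkedAt, ← h]

/-- Delete the value `0` from `g` (value ↦ position), closing the gap at position `g 0`. -/
def deleteZero (g : Perm (Fin (m + 2))) : Perm (Fin (m + 1)) :=
  (finSuccAboveEquiv 0).trans <|
    (g.subtypeEquiv (p := (· ≠ 0)) (q := (· ≠ g 0)) fun _ => g.injective.ne_iff.symm).trans
      (finSuccAboveEquiv (g 0)).symm

theorem succAbove_deleteZero (g : Perm (Fin (m + 2))) (j : Fin (m + 1)) :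
    (g 0).succAbove (deleteZero g j) = g j.succ := by
  simp only [deleteZero, trans_apply, finSuccAboveEquiv_apply, Fin.succAbove_zero,
    subtypeEquiv_apply]
  exact congrArg Subtype.val ((finSuccAboveEquiv (g 0)).apply_symm_apply _)

/-- Give the value `0` the position `p`, shifting the positions `≥ p` of `g` up by one. -/
def insertZero (p : Fin (m + 2)) (g : Perm (Fin (m + 1))) : Perm (Fin (m + 2)) :=
  (finSuccEquiv (m + 1)).trans (g.optionCongr.trans (finSuccEquiv' p).symm)

@[simp]
theorem insertZero_zero (p : Fin (m + 2)) (g : Perm (Fin (m + 1))) : insertZero p g 0 = p := by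
  simp [insertZero]

@[simp]
theorem insertZero_succ (p : Fin (m + 2)) (g : Perm (Fin (m + 1))) (j : Fin (m + 1)) :
    insertZero p g j.succ = p.succAbove (g j) := by
  simp [insertZero]

theorem deleteZero_insertZero (p : Fin (m + 2)) (g : Perm (Fin (m + 1))) :
    deleteZero (insertZero p g) = g :=
  Equiv.ext fun j => by simpa using succAbove_deleteZero (insertZero p g) j

theorem insertZero_deleteZero (g : Perm (Fin (m + 2))) : insertZero (g 0) (deleteZero g) = g := by
  ext v
  cases v using Fin.cases <;> simp [succAbove_deleteZero]

theorem isLinkedAt_insertZero_last (g : Perm (Fin (m + 1))) :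
    (insertZero (g (Fin.last m)).succ g).IsLinkedAt (Fin.last (m + 1)) := by
  rw [IsLinkedAt, Fin.last_add_one, insertZero_zero, ← Fin.succ_last, insertZero_succ,
    Fin.succAbove_of_castSucc_lt _ _ Fin.castSucc_lt_succ, Fin.val_succ, Fin.val_castSucc]

theorem isLinkedAt_insertZero_succ_iff (g : Perm (Fin (m + 1))) {j : Fin (m + 1)}
    (hj : j ≠ Fin.last m) :
    (insertZero (g (Fin.last m)).succ g).IsLinkedAt j.succ ↔ g.IsLinkedAt j := by
  have hsucc : j.succ + 1 = (j + 1).succ := by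
    ext
    simp [Fin.val_add_one, hj, ← Fin.succ_last]
  rw [IsLinkedAt, IsLinkedAt, hsucc, insertZero_succ, insertZero_succ]
  refine Fin.val_succAbove_eq_val_succAbove_add_one_iff fun h => hj (g.injective ?_)
  exact Fin.ext (by simpa using h)

theorem insertZero_mem_linkedPerms_iff {S : Finset (Fin (m + 2))} (h0 : 0 ∉ S)
    (g : Perm (Fin (m + 1))) :
    insertZero (g (Fin.last m)).succ g ∈ linkedPerms S ↔
      g ∈ linkedPerms (({j | j.succ ∈ S} : Finset (Fin (m + 1))).erase (Fin.last m)) := by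
  simp only [mem_linkedPerms, mem_erase, mem_filter, mem_univ, true_and, and_imp]
  constructor
  · intro h j hj hjS
    exact (isLinkedAt_insertZero_succ_iff g hj).1 (h _ hjS)
  · intro h i hi
    cases i using Fin.cases with
    | zero => exact absurd hi h0
    | succ j =>
      obtain rfl | hj := eq_or_ne j (Fin.last m)
      · simpa using isLinkedAt_insertZero_last g
      · exact (isLinkedAt_insertZero_succ_iff g hj).2 (h j hj hi)

theorem insertZero_deleteZero_of_isLinkedAt_last {g : Perm (Fin (m + 2))}
    (h : g.IsLinkedAt (Fin.last (m + 1))) :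
    insertZero (deleteZero g (Fin.last m)).succ (deleteZero g) = g := by
  convert insertZero_deleteZero g using 2
  rw [eq_comm, ← Fin.val_succAbove_add_one_eq_iff, succAbove_deleteZero, Fin.succ_last]
  simpa [IsLinkedAt] using h.symm

theorem card_linkedPerms_of_last_mem {S : Finset (Fin (m + 2))} (hl : Fin.last (m + 1) ∈ S)
    (h0 : 0 ∉ S) :
    #(linkedPerms S) =
      #(linkedPerms (({j | j.succ ∈ S} : Finset (Fin (m + 1))).erase (Fin.last m))) := by
  have hinv : ∀ g ∈ linkedPerms S,
      insertZero (deleteZero g (Fin.last m)).succ (deleteZero g) = g :=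
    fun g hg => insertZero_deleteZero_of_isLinkedAt_last (mem_linkedPerms.1 hg _ hl)
  refine card_nbij' deleteZero (fun g => insertZero (g (Fin.last m)).succ g) (fun g hg => ?_)
    (fun g hg => (insertZero_mem_linkedPerms_iff h0 g).2 hg) hinv
    (fun g _ => deleteZero_insertZero _ g)
  rw [mem_coe, ← insertZero_mem_linkedPerms_iff h0, hinv g hg]
  exact hg

theorem card_linkedPerms {S : Finset (Fin n)} (hS : S ≠ univ) :
    #(linkedPerms S) = (n - #S).factorial := by
  suffices ∀ m (S : Finset (Fin (m + 1))), S ≠ univ → #(linkedPerms S) = (m + 1 - #S).factorial by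
    obtain ⟨m, rfl⟩ := Nat.exists_eq_add_one_of_ne_zero (NeZero.ne n)
    exact this m S hS
  intro m
  induction m with
  | zero =>
    intro S hS
    obtain rfl : S = ∅ := by
      rcases S.eq_empty_or_nonempty with h | ⟨x, hx⟩
      · exact h
      · refine absurd (eq_univ_of_forall fun y => ?_) hS
        rwa [Fin.fin_one_eq_zero y, ← Fin.fin_one_eq_zero x]
    simp [linkedPerms_empty]
  | succ m ih =>
    intro S hS
    rcases S.eq_empty_or_nonempty with rfl | hne
    · simp [linkedPerms_empty, Fintype.card_perm]
    obtain ⟨i, hi, hi1⟩ := Fin.exists_mem_add_one_notMem hne hS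
    -- rotating the values by `c` turns `i` into the last value and `i + 1` into `0`
    set c := Fin.last (m + 1) - i
    set S₂ := S.map (Equiv.addRight c).toEmbedding
    have hl : Fin.last (m + 1) ∈ S₂ := mem_map.2 ⟨i, hi, by simp [c]⟩
    have h0 : 0 ∉ S₂ := by
      simp only [S₂, mem_map, not_exists, not_and]
      intro j hj hj0
      have hc : i + 1 + c = 0 := calc
        i + 1 + c = Fin.last (m + 1) + 1 := by simp only [c]; abel
        _ = 0 := Fin.last_add_one _
      exact hi1 (add_right_cancel (hj0.trans hc.symm) ▸ hj)
    set S' := ({j | j.succ ∈ S₂} : Finset (Fin (m + 1))).erase (Fin.last m)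
    have hS' : S' ≠ univ := fun h => notMem_erase _ _ (h ▸ mem_univ (Fin.last m))
    have hl' : Fin.last m ∈ ({j | j.succ ∈ S₂} : Finset (Fin (m + 1))) := by simpa using hl
    rw [← card_linkedPerms_map_addRight S c, card_linkedPerms_of_last_mem hl h0, ih _ hS',
      card_erase_of_mem hl', Fin.card_filter_univ_succ_mem h0, card_map]
    have := hne.card_pos
    congr 1
    omega

theorem card_linkedPerms_eq_ite (S : Finset (Fin n)) :
    #(linkedPerms S) = if #S < n then (n - #S).factorial else 0 := by
  obtain rfl | hS := eq_or_ne S univ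
  · simp [linkedPerms_univ]
  · rw [if_pos (by simpa using (card_lt_iff_ne_univ S).2 hS), card_linkedPerms hS]

theorem card_filter_forall_not_isLinkedAt :
    (#({g : Perm (Fin n) | ∀ i, ¬ g.IsLinkedAt i}) : ℤ) =
      ∑ k ∈ range n, (-1) ^ k * ((n.factorial / k.factorial : ℕ) : ℤ) := by
  let L (i : Fin n) : Finset (Perm (Fin n)) := {g | g.IsLinkedAt i}
  have hinf (t : Finset (Fin n)) : t.inf L = linkedPerms t := by
    ext g; simp [L, mem_inf, mem_linkedPerms]
  have hcompl :
      univ.inf (fun i => (L i)ᶜ) = ({g | ∀ i, ¬ g.IsLinkedAt i} : Finset (Perm (Fin n))) := by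
    ext g; simp [L, mem_inf]
  rw [← hcompl, inclusion_exclusion_card_inf_compl]
  simp_rw [hinf, card_linkedPerms_eq_ite]
  refine (sum_powerset_apply_card
    (fun k => (-1 : ℤ) ^ k * ((if k < n then (n - k).factorial else 0 : ℕ) : ℤ))).trans ?_
  rw [card_univ, Fintype.card_fin, sum_range_succ, if_neg (lt_irrefl n), Nat.cast_zero, mul_zero,
    smul_zero, add_zero]
  refine sum_congr rfl fun k hk => ?_
  rw [if_pos (mem_range.1 hk), nsmul_eq_mul,
    ← Nat.choose_mul_factorial_sub_eq_factorial_div (mem_range.1 hk).le]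
  push_cast
  ring

theorem avoidsSucc_and_not_containsN1_iff (σ : Perm (Fin n)) :
    avoidsSucc n σ ∧ ¬ containsN1 n σ ↔ ∀ i, ¬ σ⁻¹.IsLinkedAt i := by
  simp only [isLinkedAt_inv_iff]
  trans ∀ k (h : k + 1 < n), σ ⟨k + 1, h⟩ ≠ σ ⟨k, by omega⟩ + 1
  · simp only [avoidsSucc, containsN1, ne_eq, Fin.eq_add_one_iff, not_or, not_and, not_exists,
      forall_and]
  · exact ⟨fun h i ⟨k, hk, hki, heq⟩ => h k hk (hki ▸ heq), fun h k hk heq => h _ ⟨k, hk, rfl, heq⟩⟩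

theorem dCount_eq_card_filter_forall_not_isLinkedAt :
    DCount n = #({g : Perm (Fin n) | ∀ i, ¬ g.IsLinkedAt i}) := by
  classical
  rw [DCount, Nat.card_eq_fintype_card, Fintype.card_subtype]
  exact card_equiv (Equiv.inv _) fun σ => by simp [avoidsSucc_and_not_containsN1_iff]

end Equiv.Perm

theorem stmt_5 (n : ℕ) (hn : 1 ≤ n) :
    (DCount n : ℤ) =
      ∑ k ∈ Finset.range n, (-1 : ℤ) ^ k * ((n.factorial / k.factorial : ℕ) : ℤ) := by
  have : NeZero n := NeZero.of_pos hn
  rw [Equiv.Perm.dCount_eq_card_filter_forall_not_isLinkedAt,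
    Equiv.Perm.card_filter_forall_not_isLinkedAt]
end

section
/- For every integer n ≥ 1, n divides D_n. -/
/-!
Reading the values modulo `n`, the forbidden patterns `12, 23, …, (n-1)n, n1` are exactly the
cyclic successions `σ(k+1) = σ(k) + 1` in `Fin n`. Adding a constant `c : Fin n` to every value
preserves this condition, and the value `σ(0)` splits the avoiding permutations into `n` classes
of equal size, each in bijection with those having `σ(0) = 0`.
-/

theorem Fin.eq_add_one_iff_val {n : ℕ} [NeZero n] (a b : Fin n) :
    b = a + 1 ↔ b.val = a.val + 1 ∨ (a.val = n - 1 ∧ b.val = 0) := by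
  obtain ⟨m, rfl⟩ := Nat.exists_eq_succ_of_ne_zero (NeZero.ne n)
  rw [Fin.ext_iff, Fin.val_add_one]
  have := a.isLt
  split_ifs with h <;> simp only [Fin.ext_iff, Fin.val_last] at h <;> omega

section Translation

variable {α G : Type*} [AddGroup G]

def Equiv.equivProdTranslateToZero (a : α) (P : (α ≃ G) → Prop)
    (hP : ∀ f c, P (f.trans (Equiv.addRight c)) ↔ P f) :
    {f : α ≃ G // P f} ≃ G × {f : α ≃ G // P f ∧ f a = 0} where
  toFun f := (f.1 a, ⟨f.1.trans (Equiv.addRight (-f.1 a)), (hP _ _).2 f.2, by simp⟩)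
  invFun p := ⟨p.2.1.trans (Equiv.addRight p.1), (hP _ _).2 p.2.2.1⟩
  left_inv f := by ext; simp
  right_inv := by
    rintro ⟨c, f, hf, hf0⟩
    ext <;> simp [hf0]

theorem card_dvd_card_of_forall_addRight_iff (a : α) (P : (α ≃ G) → Prop)
    (hP : ∀ f c, P (f.trans (Equiv.addRight c)) ↔ P f) :
    Nat.card G ∣ Nat.card {f : α ≃ G // P f} := by
  rw [Nat.card_congr (Equiv.equivProdTranslateToZero a P hP), Nat.card_prod]
  exact dvd_mul_right _ _

end Translation

section CyclicSuccession

variable {n : ℕ} [NeZero n]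

def NoCyclicSucc (σ : Equiv.Perm (Fin n)) : Prop :=
  ∀ (k : ℕ) (h : k + 1 < n), σ ⟨k + 1, h⟩ ≠ σ ⟨k, Nat.lt_of_succ_lt h⟩ + 1

theorem avoidsSucc_and_not_containsN1_iff_s9 (σ : Equiv.Perm (Fin n)) :
    (avoidsSucc n σ ∧ ¬ containsN1 n σ) ↔ NoCyclicSucc σ := by
  simp only [avoidsSucc, containsN1, NoCyclicSucc, Ne, Fin.eq_add_one_iff_val, not_or,
    not_exists, not_and, forall_and]

theorem noCyclicSucc_trans_addRight_iff (σ : Equiv.Perm (Fin n)) (c : Fin n) :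
    NoCyclicSucc (σ.trans (Equiv.addRight c)) ↔ NoCyclicSucc σ := by
  simp only [NoCyclicSucc, Equiv.trans_apply, Equiv.coe_addRight, add_right_comm _ c 1,
    Ne, add_left_inj]

end CyclicSuccession

theorem stmt_9 (n : ℕ) (hn : 1 ≤ n) : n ∣ DCount n := by
  have : NeZero n := ⟨by omega⟩
  have h := card_dvd_card_of_forall_addRight_iff (0 : Fin n) NoCyclicSucc
    noCyclicSucc_trans_addRight_iff
  rwa [Nat.card_fin, ← Nat.card_congr (Equiv.subtypeEquivRight
    avoidsSucc_and_not_containsN1_iff_s9)] at h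
end

section
/- For every integer n ≥ 2 and every j ∈ {2,…,n}, the number of derangements σ of {1,…,n} (permutations with σ(k) ≠ k for all k) whose first digit σ(1) equals j is exactly d_{n−1}; moreover no derangement has first digit 1. In particular the derangements of {1,…,n} are equidistributed over their n−1 nonempty classes. -/
open Equiv Finset
open scoped Nat

namespace Fin

variable {m : ℕ}

theorem val_succAbove_s14 (w : Fin (m + 1)) (a : Fin m) :
    (w.succAbove a).val = if a.val < w.val then a.val else a.val + 1 := by
  split_ifs with h
  · rw [succAbove_of_castSucc_lt _ _ (by simpa [lt_def] using h)]; rfl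
  · rw [succAbove_of_le_castSucc _ _ (by simpa [le_def] using h)]; rfl

theorem succAbove_mk_of_lt (p : Fin (m + 1)) {k : ℕ} (hk : k < m) (hkp : k < p.val) :
    p.succAbove ⟨k, hk⟩ = ⟨k, by omega⟩ :=
  Fin.ext <| by simp [val_succAbove_s14, hkp]

theorem val_succAbove_add_one_eq_iff_s14 (w : Fin (m + 1)) (a : Fin m) :
    (w.succAbove a).val + 1 = w.val ↔ w = a.succ := by
  rw [Fin.ext_iff, val_succAbove_s14, val_succ]
  split_ifs <;> omega

theorem val_succAbove_eq_add_one_iff (w : Fin (m + 1)) {a b : Fin m} (ha : a.val + 1 ≠ w.val) :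
    (w.succAbove b).val = (w.succAbove a).val + 1 ↔ b.val = a.val + 1 := by
  rw [val_succAbove_s14, val_succAbove_s14]
  split_ifs <;> omega

theorem card_subtype_val_notMem {n : ℕ} {T : Finset ℕ} (hT : ∀ k ∈ T, k < n) :
    Nat.card {a : Fin n // a.val ∉ T} = n - #T := by
  classical
  have hmem : Nat.card {a : Fin n // a.val ∈ T} = #T := by
    rw [← Nat.card_eq_finsetCard]
    exact Nat.card_congr ⟨fun a => ⟨a.1.val, a.2⟩, fun k => ⟨⟨k.1, hT _ k.2⟩, k.2⟩,
      fun _ => rfl, fun _ => rfl⟩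
  simp only [Nat.card_eq_fintype_card] at hmem ⊢
  rw [Fintype.card_subtype_compl, hmem, Fintype.card_fin]

end Fin

namespace Equiv.Perm

variable {m : ℕ}

def insertAt (p w : Fin (m + 1)) (ρ : Perm (Fin m)) : Perm (Fin (m + 1)) :=
  ((finSuccEquiv' p).trans ρ.optionCongr).trans (finSuccEquiv' w).symm

@[simp]
theorem insertAt_apply_self (p w : Fin (m + 1)) (ρ : Perm (Fin m)) : insertAt p w ρ p = w := by
  simp [insertAt]

@[simp]
theorem insertAt_apply_succAbove (p w : Fin (m + 1)) (ρ : Perm (Fin m)) (j : Fin m) :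
    insertAt p w ρ (p.succAbove j) = w.succAbove (ρ j) := by
  simp [insertAt]

theorem insertAt_injective (p : Fin (m + 1)) :
    Function.Injective (Function.uncurry (insertAt p)) := by
  rintro ⟨w, ρ⟩ ⟨w', ρ'⟩ h
  simp only [Function.uncurry_apply_pair] at h
  have hw : w = w' := by simpa using congr($h p)
  subst hw
  refine Prod.ext rfl (Equiv.ext fun j => Fin.succAbove_right_injective (p := w) ?_)
  simpa using congr($h (p.succAbove j))

theorem insertAt_bijective (p : Fin (m + 1)) :
    Function.Bijective (Function.uncurry (insertAt p)) :=
  (Fintype.bijective_iff_injective_and_card _).mpr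
    ⟨insertAt_injective p, by simp [Fintype.card_perm, Nat.factorial_succ]⟩

theorem card_subtype_eq_of_insertAt_iff (p : Fin (m + 1)) {P : Perm (Fin (m + 1)) → Prop}
    {Q : Perm (Fin m) → Prop} (f : Perm (Fin m) → Fin (m + 1))
    (h : ∀ w ρ, P (insertAt p w ρ) ↔ w = f ρ ∧ Q ρ) :
    Nat.card {σ // P σ} = Nat.card {ρ // Q ρ} := calc
  Nat.card {σ // P σ} = Nat.card {x : Fin (m + 1) × Perm (Fin m) // x.1 = f x.2 ∧ Q x.2} :=
    Nat.card_congr ((Equiv.ofBijective _ (insertAt_bijective p)).subtypeEquiv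
      fun x => (h x.1 x.2).symm).symm
  _ = Nat.card {ρ // Q ρ} := Nat.card_congr
    { toFun := fun x => ⟨x.1.2, x.2.2⟩
      invFun := fun ρ => ⟨(f ρ, ρ), rfl, ρ.2⟩
      left_inv := by rintro ⟨⟨w, ρ⟩, hw, _⟩; simp only at hw; subst hw; rfl
      right_inv := fun _ => rfl }

theorem card_forall_apply_eq_self {α : Type*} [Finite α] (p : α → Prop) :
    Nat.card {π : Perm α // ∀ a, p a → π a = a} = (Nat.card {a // ¬ p a})! := by
  classical
  rw [← Nat.card_perm]
  exact Nat.card_congr ((Perm.subtypeEquivSubtypePerm fun a => ¬ p a).trans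
    (subtypeEquivRight fun π => by simp only [not_not])).symm

end Equiv.Perm

open Equiv.Perm

section Derangements

variable {α : Type*}

theorem card_derangements_apply_conj (g : Perm α) (a b : α) :
    Nat.card {σ : Perm α // σ ∈ derangements α ∧ σ (g a) = g b} =
      Nat.card {σ : Perm α // σ ∈ derangements α ∧ σ a = b} := by
  refine Nat.card_congr ((MulAut.conj g).toEquiv.subtypeEquiv fun σ => ?_).symm
  have hder : σ ∈ derangements α ↔ g * σ * g⁻¹ ∈ derangements α := by
    simp only [derangements, Set.mem_ofPred_eq, Perm.mul_apply]
    refine ⟨fun h x hx => h (g⁻¹ x) (Perm.eq_inv_iff_eq.mpr hx), fun h x hx => h (g x) ?_⟩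
    simp [hx]
  simp [hder]

theorem card_derangements_apply_eq_of_ne [DecidableEq α] {a b c : α} (hb : b ≠ a) (hc : c ≠ a) :
    Nat.card {σ : Perm α // σ ∈ derangements α ∧ σ a = b} =
      Nat.card {σ : Perm α // σ ∈ derangements α ∧ σ a = c} := by
  have := card_derangements_apply_conj (swap b c) a b
  rwa [swap_apply_of_ne_of_ne hb.symm hc.symm, swap_apply_left, eq_comm] at this

end Derangements

theorem Finset.card_inf_filter_univ {ι γ : Type*} [Fintype γ] [DecidableEq γ] (t : Finset ι)
    (R : ι → γ → Prop) [∀ i, DecidablePred (R i)] :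
    #(t.inf fun i => univ.filter (R i)) = Nat.card {c // ∀ i ∈ t, R i c} := by
  rw [Nat.card_eq_fintype_card, Fintype.card_subtype]
  congr 1
  ext c
  simp [mem_inf]

theorem Nat.card_forall_not_eq_of_card_forall_eq {ι α β : Type*} [Fintype α] [Fintype β]
    (s : Finset ι) {P : ι → α → Prop} {Q : ι → β → Prop}
    (h : ∀ t ⊆ s, Nat.card {a // ∀ i ∈ t, P i a} = Nat.card {b // ∀ i ∈ t, Q i b}) :
    Nat.card {a // ∀ i ∈ s, ¬ P i a} = Nat.card {b // ∀ i ∈ s, ¬ Q i b} := by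
  classical
  zify
  rw [← card_inf_filter_univ s fun i a => ¬ P i a, ← card_inf_filter_univ s fun i b => ¬ Q i b]
  simp only [← compl_filter]
  rw [inclusion_exclusion_card_inf_compl, inclusion_exclusion_card_inf_compl]
  refine sum_congr rfl fun t ht => ?_
  rw [card_inf_filter_univ, card_inf_filter_univ, h t (mem_powerset.mp ht)]

section Successions

variable {m : ℕ}

def HasSuccessionAt (τ : Perm (Fin m)) (k : ℕ) : Prop :=
  ∃ h : k + 1 < m, (τ ⟨k + 1, h⟩).val = (τ ⟨k, Nat.lt_of_succ_lt h⟩).val + 1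

def MapsToSuccAt (ρ : Perm (Fin m)) (k : ℕ) : Prop :=
  ∃ h : k + 1 < m, (ρ ⟨k, Nat.lt_of_succ_lt h⟩).val = k + 1

theorem avoidsSucc_iff (τ : Perm (Fin m)) : avoidsSucc m τ ↔ ∀ k, ¬ HasSuccessionAt τ k :=
  ⟨fun H k ⟨h, e⟩ => H k h e, fun H k h e => H k ⟨h, e⟩⟩

theorem hasSuccessionAt_iff {τ : Perm (Fin m)} {k : ℕ} (h : k + 1 < m) :
    HasSuccessionAt τ k ↔ (τ ⟨k + 1, h⟩).val = (τ ⟨k, Nat.lt_of_succ_lt h⟩).val + 1 :=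
  exists_prop_of_true h

theorem hasSuccessionAt_insertAt_iff {k₀ : ℕ} (hk₀ : k₀ < m) (w : Fin (m + 1))
    (ρ : Perm (Fin m)) :
    HasSuccessionAt (insertAt ⟨k₀ + 1, by omega⟩ w ρ) k₀ ↔ w = (ρ ⟨k₀, hk₀⟩).succ := by
  rw [hasSuccessionAt_iff (by omega), ← Fin.succAbove_mk_of_lt ⟨k₀ + 1, by omega⟩ hk₀ (by simp),
    insertAt_apply_succAbove, ← Fin.val_succAbove_add_one_eq_iff_s14, eq_comm, insertAt_apply_self]

theorem hasSuccessionAt_insertAt_iff_of_lt {k₀ k : ℕ} (hk₀ : k₀ < m) (hk : k < k₀)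
    (ρ : Perm (Fin m)) :
    HasSuccessionAt (insertAt ⟨k₀ + 1, by omega⟩ (ρ ⟨k₀, hk₀⟩).succ ρ) k ↔
      HasSuccessionAt ρ k := by
  have hne : (ρ ⟨k, by omega⟩).val + 1 ≠ (ρ ⟨k₀, hk₀⟩).succ.val := by
    simp [Fin.val_inj, hk.ne]
  rw [hasSuccessionAt_iff (by omega), hasSuccessionAt_iff (by omega),
    ← Fin.succAbove_mk_of_lt ⟨k₀ + 1, by omega⟩ (show k < m by omega) (by simp; omega),
    ← Fin.succAbove_mk_of_lt ⟨k₀ + 1, by omega⟩ (show k + 1 < m by omega) (by simp; omega),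
    insertAt_apply_succAbove, insertAt_apply_succAbove, Fin.val_succAbove_eq_add_one_iff _ hne]

theorem card_forall_hasSuccessionAt (T : Finset ℕ) :
    ∀ m, (∀ k ∈ T, k + 1 < m) →
      Nat.card {τ : Perm (Fin m) // ∀ k ∈ T, HasSuccessionAt τ k} = (m - #T)! := by
  induction T using Finset.induction_on_max with
  | empty =>
    intro m _
    simp [Fintype.card_perm]
  | insert k₀ T hlt ih =>
    intro m hT
    have hk₀m := hT k₀ (mem_insert_self k₀ T)
    obtain ⟨m, rfl⟩ : ∃ m', m = m' + 1 := ⟨m - 1, by omega⟩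
    have hk₀ : k₀ < m := by omega
    have hcard : Nat.card {τ : Perm (Fin (m + 1)) // ∀ k ∈ insert k₀ T, HasSuccessionAt τ k} =
        Nat.card {ρ : Perm (Fin m) // ∀ k ∈ T, HasSuccessionAt ρ k} := by
      refine card_subtype_eq_of_insertAt_iff ⟨k₀ + 1, by omega⟩ (fun ρ => (ρ ⟨k₀, hk₀⟩).succ) ?_
      intro w ρ
      rw [forall_mem_insert, hasSuccessionAt_insertAt_iff hk₀]
      refine and_congr_right fun hw => ?_
      subst hw
      exact forall₂_congr fun k hk => hasSuccessionAt_insertAt_iff_of_lt hk₀ (hlt k hk) ρ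
    rw [hcard, ih m fun k hk => by have := hlt k hk; omega,
      card_insert_of_notMem fun h => (hlt k₀ h).false, Nat.add_sub_add_right]

end Successions

section MapsToSucc

variable {m : ℕ}

theorem mapsToSuccAt_iff {ρ : Perm (Fin m)} {k : ℕ} (h : k + 1 < m) :
    MapsToSuccAt ρ k ↔ ρ ⟨k, Nat.lt_of_succ_lt h⟩ = ⟨k + 1, h⟩ := by
  rw [MapsToSuccAt, exists_prop_of_true h, Fin.ext_iff]

theorem card_forall_mapsToSuccAt {T : Finset ℕ} (hT : ∀ k ∈ T, k < m) :
    Nat.card {ρ : Perm (Fin (m + 1)) // ∀ k ∈ T, MapsToSuccAt ρ k} = (m + 1 - #T)! := by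
  have hfix (ρ : Perm (Fin (m + 1))) : (∀ k ∈ T, MapsToSuccAt ρ k) ↔
      ∀ a : Fin (m + 1), a.val ∈ T → ((finRotate (m + 1))⁻¹ * ρ) a = a := by
    simp only [Perm.mul_apply, Perm.inv_eq_iff_eq]
    refine ⟨fun H a ha => ?_, fun H k hk => ?_⟩
    · rw [(mapsToSuccAt_iff (by simpa using hT _ ha)).mp (H _ ha), finRotate_of_lt (hT _ ha)]
    · rw [mapsToSuccAt_iff (by simpa using hT _ hk), H ⟨k, Nat.lt_succ_of_lt (hT k hk)⟩ hk,
        finRotate_of_lt (hT _ hk)]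
  calc Nat.card {ρ : Perm (Fin (m + 1)) // ∀ k ∈ T, MapsToSuccAt ρ k}
      = Nat.card {π : Perm (Fin (m + 1)) // ∀ a : Fin (m + 1), a.val ∈ T → π a = a} :=
        Nat.card_congr ((Equiv.mulLeft _).subtypeEquiv hfix)
    _ = (m + 1 - #T)! := by
        rw [card_forall_apply_eq_self,
          Fin.card_subtype_val_notMem fun k hk => Nat.lt_succ_of_lt (hT k hk)]

end MapsToSucc

theorem card_forall_not_mapsToSuccAt_eq {m : ℕ} :
    Nat.card {ρ : Perm (Fin (m + 1)) // ∀ k, ¬ MapsToSuccAt ρ k} =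
      Nat.card {τ : Perm (Fin (m + 1)) // ∀ k, ¬ HasSuccessionAt τ k} := by
  have hrange (P : ℕ → Prop) (hP : ∀ k, P k → k < m) : (∀ k, ¬ P k) ↔ ∀ k ∈ range m, ¬ P k :=
    ⟨fun H k _ => H k, fun H k hk => H k (mem_range.mpr (hP k hk)) hk⟩
  rw [Nat.card_congr (subtypeEquivRight fun ρ => hrange _ fun k ⟨_, _⟩ => by omega),
    Nat.card_congr (subtypeEquivRight fun τ => hrange _ fun k ⟨_, _⟩ => by omega)]
  refine Nat.card_forall_not_eq_of_card_forall_eq _ fun t ht => ?_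
  have hlt : ∀ k ∈ t, k < m := fun k hk => mem_range.mp (ht hk)
  rw [card_forall_mapsToSuccAt hlt,
    card_forall_hasSuccessionAt t _ fun k hk => Nat.succ_lt_succ (hlt k hk)]

theorem card_derangements_apply_zero_last_eq (m : ℕ) :
    Nat.card {σ : Perm (Fin (m + 2)) // σ ∈ derangements _ ∧ σ 0 = Fin.last (m + 1)} =
      Nat.card {ρ : Perm (Fin (m + 1)) // ∀ k, ¬ MapsToSuccAt ρ k} := by
  refine card_subtype_eq_of_insertAt_iff 0 (fun _ => Fin.last (m + 1)) fun w ρ => ?_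
  rw [insertAt_apply_self, and_comm]
  refine and_congr_right fun hw => ?_
  subst hw
  have hsucc (j : Fin (m + 1)) : insertAt 0 (Fin.last (m + 1)) ρ j.succ = (ρ j).castSucc :=
    (insertAt_apply_succAbove 0 _ ρ j).trans (by simp)
  simp only [derangements, Set.mem_ofPred_eq]
  rw [Fin.forall_fin_succ]
  simp only [insertAt_apply_self, hsucc, ne_eq, Fin.ext_iff, Fin.val_castSucc, Fin.val_succ]
  exact ⟨fun ⟨_, H⟩ k ⟨_, e⟩ => H _ e,
    fun H => ⟨by simp, fun j e => H j ⟨by have := (ρ j).isLt; omega, e⟩⟩⟩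

theorem stmt_14 (n : ℕ) (hn : 2 ≤ n) :
    (∀ j : Fin n, 1 ≤ j.val →
      Nat.card {σ : Equiv.Perm (Fin n) //
          (∀ k, σ k ≠ k) ∧ σ ⟨0, by omega⟩ = j} = dCount (n - 1)) ∧
    (∀ σ : Equiv.Perm (Fin n), (∀ k, σ k ≠ k) →
      σ ⟨0, by omega⟩ ≠ ⟨0, by omega⟩) := by
  refine ⟨fun j hj => ?_, fun σ hσ => hσ _⟩
  obtain ⟨m, rfl⟩ : ∃ m, n = m + 2 := ⟨n - 2, by omega⟩
  calc Nat.card {σ : Perm (Fin (m + 2)) // (∀ k, σ k ≠ k) ∧ σ ⟨0, _⟩ = j}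
      = Nat.card {σ : Perm (Fin (m + 2)) // σ ∈ derangements _ ∧ σ 0 = Fin.last (m + 1)} :=
        card_derangements_apply_eq_of_ne (by rintro rfl; simp at hj) (by simp)
    _ = Nat.card {ρ : Perm (Fin (m + 1)) // ∀ k, ¬ MapsToSuccAt ρ k} :=
        card_derangements_apply_zero_last_eq m
    _ = Nat.card {τ : Perm (Fin (m + 1)) // ∀ k, ¬ HasSuccessionAt τ k} :=
        card_forall_not_mapsToSuccAt_eq
    _ = dCount (m + 2 - 1) := Nat.card_congr (subtypeEquivRight fun τ => (avoidsSucc_iff τ).symm)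
end

section
/- For every integer n ≥ 2 and every j ∈ {2,…,n}, the number of arrangements of {1,…,n} that avoid all patterns 12, 23, …, (n−1)n, contain the pattern n1, and have first digit σ(1) = j is exactly Der_{n−2}. -/
open Equiv Finset
open scoped Nat

theorem Fin.val_succAbove_s16 {m : ℕ} (p : Fin (m + 1)) (k : Fin m) :
    (p.succAbove k : ℕ) = if (k : ℕ) < p then (k : ℕ) else k + 1 := by
  simp only [Fin.succAbove, Fin.lt_def, Fin.val_castSucc]
  split_ifs <;> simp

theorem Nat.choose_mul_factorial_sub {m k : ℕ} (h : k ≤ m) :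
    m.choose k * (m - k)! = (k + 1).ascFactorial (m - k) := by
  rw [← Nat.add_descFactorial_eq_ascFactorial, Nat.add_sub_cancel' h,
    Nat.descFactorial_eq_factorial_mul_choose, Nat.choose_symm h, mul_comm]

namespace Equiv.Perm

variable {m n : ℕ}

/-- `w` comes immediately after `v` in the one-line notation `σ 0, σ 1, …` of `σ`. -/
def FollowedBy (σ : Perm (Fin n)) (v w : Fin n) : Prop :=
  (σ.symm w : ℕ) = σ.symm v + 1

theorem followedBy_apply_apply (σ : Perm (Fin n)) (k l : Fin n) :
    σ.FollowedBy (σ k) (σ l) ↔ (l : ℕ) = k + 1 := by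
  simp [FollowedBy]

theorem FollowedBy.right_unique {σ : Perm (Fin n)} {v w w' : Fin n}
    (h : σ.FollowedBy v w) (h' : σ.FollowedBy v w') : w = w' :=
  σ.symm.injective (Fin.ext (h.trans h'.symm))

theorem FollowedBy.left_unique {σ : Perm (Fin n)} {v v' w : Fin n}
    (h : σ.FollowedBy v w) (h' : σ.FollowedBy v' w) : v = v' :=
  σ.symm.injective (Fin.ext (by unfold FollowedBy at h h'; omega))

theorem followedBy_mul_left (e σ : Perm (Fin n)) (v w : Fin n) :
    (e * σ).FollowedBy (e v) (e w) ↔ σ.FollowedBy v w := by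
  simp [FollowedBy, Perm.mul_def]

/-- The word of `σ` with the letter `q` erased and the larger letters renumbered. -/
def deleteLetter (σ : Perm (Fin (m + 1))) (q : Fin (m + 1)) : Perm (Fin m) :=
  ((finSuccEquiv' (σ.symm q)).symm.trans (σ.trans (finSuccEquiv' q))).removeNone

theorem succAbove_deleteLetter_apply (σ : Perm (Fin (m + 1))) (q : Fin (m + 1)) (k : Fin m) :
    q.succAbove (σ.deleteLetter q k) = σ ((σ.symm q).succAbove k) := by
  have hne : σ ((σ.symm q).succAbove k) ≠ q := fun h =>
    Fin.succAbove_ne _ k (σ.injective (h.trans (σ.apply_symm_apply q).symm))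
  obtain ⟨k', hk'⟩ := Fin.exists_succAbove_eq hne
  have hsome : some (σ.deleteLetter q k) = some k' := by
    rw [deleteLetter, Equiv.removeNone_some _ ⟨k', ?_⟩] <;>
      simp [finSuccEquiv'_symm_some, ← hk', finSuccEquiv'_succAbove]
  rw [Option.some_inj.mp hsome, hk']

theorem symm_apply_succAbove (σ : Perm (Fin (m + 1))) (q : Fin (m + 1)) (x : Fin m) :
    σ.symm (q.succAbove x) = (σ.symm q).succAbove ((σ.deleteLetter q).symm x) := by
  rw [symm_apply_eq, ← succAbove_deleteLetter_apply, apply_symm_apply]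

theorem apply_zero_eq_succAbove_deleteLetter {σ : Perm (Fin (m + 2))} {q : Fin (m + 2)}
    (hq : σ.symm q ≠ 0) : σ 0 = q.succAbove (σ.deleteLetter q 0) := by
  rw [succAbove_deleteLetter_apply, Fin.succAbove_ne_zero_zero hq]

theorem apply_zero_eq_zero_iff_deleteLetter {σ : Perm (Fin (m + 2))} {q : Fin (m + 2)}
    (hq : q ≠ 0) (hpos : σ.symm q ≠ 0) : σ 0 = 0 ↔ σ.deleteLetter q 0 = 0 := by
  rw [apply_zero_eq_succAbove_deleteLetter hpos, Fin.succAbove_eq_zero_iff hq]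

theorem injective_symm_apply_deleteLetter (q : Fin (m + 1)) :
    Function.Injective fun σ : Perm (Fin (m + 1)) => (σ.symm q, σ.deleteLetter q) := by
  intro σ σ' h
  simp only [Prod.mk.injEq] at h
  obtain ⟨hp, hτ⟩ := h
  ext1 x
  rcases eq_or_ne x (σ.symm q) with rfl | hx
  · rw [apply_symm_apply, hp, apply_symm_apply]
  · obtain ⟨k, rfl⟩ := Fin.exists_succAbove_eq hx
    rw [← succAbove_deleteLetter_apply, hp, ← succAbove_deleteLetter_apply, hτ]

noncomputable def deleteLetterEquiv (q : Fin (m + 1)) :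
    Perm (Fin (m + 1)) ≃ Fin (m + 1) × Perm (Fin m) :=
  Equiv.ofBijective _ <| (Fintype.bijective_iff_injective_and_card _).mpr
    ⟨injective_symm_apply_deleteLetter q, by
      simp [Fintype.card_perm, Nat.factorial_succ]⟩

theorem card_eq_of_position (q : Fin (m + 1)) (f : Perm (Fin m) → Fin (m + 1))
    {P : Perm (Fin (m + 1)) → Prop} {Q : Perm (Fin m) → Prop}
    (h : ∀ σ, P σ ↔ σ.symm q = f (σ.deleteLetter q) ∧ Q (σ.deleteLetter q)) :
    Nat.card {σ // P σ} = Nat.card {τ // Q τ} := by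
  rw [Nat.card_congr ((deleteLetterEquiv q).subtypeEquiv (p := P)
    (q := fun x => x.1 = f x.2 ∧ Q x.2) h)]
  exact Nat.card_congr
    { toFun := fun x => ⟨x.1.2, x.2.2⟩
      invFun := fun τ => ⟨(f τ, τ), rfl, τ.2⟩
      left_inv := fun x => Subtype.ext (Prod.ext x.2.1.symm rfl)
      right_inv := fun _ => rfl }

theorem followedBy_deleteLetter_iff (σ : Perm (Fin (m + 1))) (q : Fin (m + 1)) (x y : Fin m) :
    (σ.deleteLetter q).FollowedBy x y ↔ σ.FollowedBy (q.succAbove x) (q.succAbove y) ∨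
      σ.FollowedBy (q.succAbove x) q ∧ σ.FollowedBy q (q.succAbove y) := by
  simp only [FollowedBy, symm_apply_succAbove, Fin.val_succAbove_s16]
  split_ifs <;> omega

theorem followedBy_succAbove_iff (σ : Perm (Fin (m + 1))) (q : Fin (m + 1)) (r : Fin m) :
    σ.FollowedBy (q.succAbove r) q ↔ σ.symm q = ((σ.deleteLetter q).symm r).succ := by
  simp only [FollowedBy, symm_apply_succAbove, Fin.val_succAbove_s16, Fin.ext_iff, Fin.val_succ]
  split_ifs <;> omega

theorem avoidsSucc_iff (σ : Perm (Fin n)) :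
    avoidsSucc n σ ↔ ∀ v w : Fin n, (w : ℕ) = v + 1 → ¬ σ.FollowedBy v w := by
  refine ⟨fun h v w hvw hF => ?_,
    fun h k hk heq => h _ _ heq ((followedBy_apply_apply σ _ _).2 rfl)⟩
  have hk : (σ.symm v : ℕ) + 1 < n := hF ▸ (σ.symm w).isLt
  apply h _ hk
  rw [show (⟨σ.symm v + 1, hk⟩ : Fin n) = σ.symm w from Fin.ext hF.symm, Fin.eta,
    apply_symm_apply, apply_symm_apply, hvw]

theorem containsN1_iff (σ : Perm (Fin (m + 1))) :
    containsN1 (m + 1) σ ↔ σ.FollowedBy (Fin.last m) 0 := by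
  constructor
  · rintro ⟨k, hk, hlast, hzero⟩
    rw [show Fin.last m = σ ⟨k, by omega⟩ from Fin.ext (by simp [hlast]),
      show 0 = σ ⟨k + 1, hk⟩ from Fin.ext hzero.symm, followedBy_apply_apply]
  · intro h
    have hk : (σ.symm (Fin.last m) : ℕ) + 1 < m + 1 := h ▸ (σ.symm 0).isLt
    refine ⟨σ.symm (Fin.last m), hk, by simp, ?_⟩
    rw [show (⟨σ.symm (Fin.last m) + 1, hk⟩ : Fin (m + 1)) = σ.symm 0 from Fin.ext h.symm]
    simp

/-- `x + 1` wraps around, so the last letter followed by `0` also counts as a succession. -/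
def AvoidsCyclicSucc (σ : Perm (Fin (m + 1))) : Prop :=
  ∀ x, ¬ σ.FollowedBy x (x + 1)

/-- Indexed by `ℕ` rather than `Fin` so that one set of indices serves every length `n`. -/
def Glued (σ : Perm (Fin n)) (i : ℕ) : Prop :=
  ∃ h : i + 1 < n, σ.FollowedBy ⟨i, by omega⟩ ⟨i + 1, h⟩

theorem glued_iff_of_lt {σ : Perm (Fin n)} {i : ℕ} (h : i + 1 < n) :
    σ.Glued i ↔ σ.FollowedBy ⟨i, by omega⟩ ⟨i + 1, h⟩ :=
  ⟨fun ⟨_, hF⟩ => hF, fun hF => ⟨h, hF⟩⟩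

theorem avoidsSucc_iff_avoidsCyclicSucc_deleteLetter {σ : Perm (Fin (m + 2))}
    (hN : σ.FollowedBy (Fin.last (m + 1)) 0) :
    avoidsSucc (m + 2) σ ↔ (σ.deleteLetter 0).AvoidsCyclicSucc := by
  have hlast : ∀ x : Fin (m + 1), σ.FollowedBy x.succ 0 ↔ x = Fin.last m :=
    fun x => ⟨fun h => Fin.succ_injective _ (h.left_unique hN), by rintro rfl; exact hN⟩
  rw [avoidsSucc_iff]
  simp only [AvoidsCyclicSucc, followedBy_deleteLetter_iff, Fin.succAbove_zero, hlast]
  constructor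
  · rintro hA x (h | ⟨rfl, h⟩)
    · by_cases hx : x = Fin.last m
      · subst hx
        simp only [Fin.last_add_one, Fin.succ_zero_eq_one, Fin.succ_last] at h
        exact one_ne_zero (h.right_unique hN)
      · exact hA _ _ (by simp [Fin.val_add_one, hx]) h
    · exact hA 0 _ (by simp) h
  · intro hC v w hw hF
    cases v using Fin.cases with
    | zero =>
      refine hC (Fin.last m) (Or.inr ⟨rfl, ?_⟩)
      rwa [Fin.last_add_one, Fin.succ_zero_eq_one,
        show (1 : Fin (m + 2)) = w from Fin.ext (by simp [hw])]
    | succ x =>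
      have hx : x ≠ Fin.last m := by
        rintro rfl
        have := w.isLt
        simp only [Fin.val_succ, Fin.val_last] at hw
        omega
      refine hC x (Or.inl ?_)
      rwa [show (x + 1).succ = w from Fin.ext (by simp [Fin.val_add_one, hx, hw])]

theorem subRight_mul_avoidsCyclicSucc_iff (c : Fin (m + 1)) (σ : Perm (Fin (m + 1))) :
    AvoidsCyclicSucc (Equiv.subRight c * σ) ↔ σ.AvoidsCyclicSucc := by
  constructor
  · intro h x hx
    apply h (x - c)
    simpa [sub_add_eq_add_sub] using (followedBy_mul_left (Equiv.subRight c) σ x (x + 1)).2 hx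
  · intro h x hx
    apply h (x + c)
    rw [← followedBy_mul_left (Equiv.subRight c)]
    simpa [show x + c + 1 - c = x + 1 by abel] using hx

theorem avoidsCyclicSucc_iff_forall_not_glued {σ : Perm (Fin (m + 1))} (h0 : σ 0 = 0) :
    σ.AvoidsCyclicSucc ↔ ∀ i, ¬ σ.Glued i := by
  have hlast : ¬ σ.FollowedBy (Fin.last m) 0 := by
    simp [FollowedBy, (symm_apply_eq σ).2 h0.symm]
  constructor
  · rintro hC i ⟨hi, hF⟩
    apply hC ⟨i, by omega⟩
    convert hF using 2
    exact Fin.val_add_one_of_lt (by simp [Fin.lt_def]; omega)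
  · intro hG x hx
    by_cases hxl : x = Fin.last m
    · subst hxl
      rw [Fin.last_add_one] at hx
      exact hlast hx
    · have hxm : (x : ℕ) + 1 < m + 1 := by
        have := Fin.val_lt_last hxl
        omega
      apply hG x ⟨hxm, ?_⟩
      convert hx using 2
      exact (Fin.val_add_one_of_lt (Fin.lt_last_iff_ne_last.2 hxl)).symm

theorem glued_deleteLetter_iff {σ : Perm (Fin (m + 2))} {a i : ℕ} (ha : a < m + 1)
    (hσ : σ.Glued a) (hi : i < a) :
    (σ.deleteLetter ⟨a + 1, by omega⟩).Glued i ↔ σ.Glued i := by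
  have hbelow : ∀ k (hk : k < m + 1), k < a + 1 →
      (⟨a + 1, by omega⟩ : Fin (m + 2)).succAbove ⟨k, hk⟩ = ⟨k, by omega⟩ :=
    fun k hk h => Fin.ext (by simp [Fin.val_succAbove_s16, h])
  rw [glued_iff_of_lt (by omega : i + 1 < m + 1), glued_iff_of_lt (by omega : i + 1 < m + 2),
    followedBy_deleteLetter_iff, hbelow i _ (by omega), hbelow (i + 1) _ (by omega),
    or_iff_left_iff_imp]
  rintro ⟨h, -⟩
  exact (hi.ne (Fin.mk.inj_iff.1 (h.left_unique ((glued_iff_of_lt (by omega)).1 hσ)))).elim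

theorem card_fixing_zero_glued (T : Finset ℕ) : ∀ m, T ⊆ range m →
    Nat.card {σ : Perm (Fin (m + 1)) // σ 0 = 0 ∧ ∀ i ∈ T, σ.Glued i} = (m - #T)! := by
  induction T using Finset.induction_on_max with
  | empty =>
    intro m _
    rw [card_eq_of_position 0 (fun _ => 0) (Q := fun _ => True)
      (fun σ => by rw [symm_apply_eq]; simp [eq_comm])]
    simp [Fintype.card_perm]
  | insert a T hlt ih =>
    intro m hsub
    have ha : a < m := mem_range.mp (hsub (mem_insert_self a T))
    obtain ⟨m, rfl⟩ : ∃ k, m = k + 1 := ⟨m - 1, by omega⟩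
    have hT : T ⊆ range m := fun x hx => mem_range.mpr (by have := hlt x hx; omega)
    rw [card_insert_of_notMem (fun h => lt_irrefl a (hlt a h)), Nat.add_sub_add_right,
      ← ih m hT]
    refine card_eq_of_position ⟨a + 1, by omega⟩ (fun τ => (τ.symm ⟨a, ha⟩).succ)
      fun σ => ?_
    have hpos : σ.Glued a ↔ σ.symm ⟨a + 1, by omega⟩ =
        ((σ.deleteLetter ⟨a + 1, by omega⟩).symm ⟨a, ha⟩).succ := by
      rw [glued_iff_of_lt (by omega), ← followedBy_succAbove_iff]
      exact iff_of_eq (congrArg (σ.FollowedBy · _) (Fin.ext (by simp [Fin.val_succAbove_s16])))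
    have hq : (⟨a + 1, by omega⟩ : Fin (m + 2)) ≠ 0 := by simp [Fin.ext_iff]
    rw [forall_mem_insert, hpos]
    refine ⟨fun ⟨h0, hp, hG⟩ => ⟨hp, ?_, fun i hi => ?_⟩,
      fun ⟨hp, h0, hG⟩ => ⟨?_, hp, fun i hi => ?_⟩⟩
    · rwa [← apply_zero_eq_zero_iff_deleteLetter hq (hp ▸ Fin.succ_ne_zero _)]
    · exact (glued_deleteLetter_iff ha (hpos.2 hp) (hlt i hi)).2 (hG i hi)
    · rwa [apply_zero_eq_zero_iff_deleteLetter hq (hp ▸ Fin.succ_ne_zero _)]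
    · exact (glued_deleteLetter_iff ha (hpos.2 hp) (hlt i hi)).1 (hG i hi)

theorem card_fixing_zero_not_glued (m : ℕ) :
    Nat.card {σ : Perm (Fin (m + 1)) // σ 0 = 0 ∧ ∀ i, ¬ σ.Glued i} =
      numDerangements m := by
  classical
  let S (i : ℕ) : Finset (Perm (Fin (m + 1))) := {σ | σ.Glued i}
  have hinf (t : Finset ℕ) : t.inf S = ({σ | ∀ i ∈ t, σ.Glued i} : Finset _) := by
    ext; simp [S, mem_inf]
  have hinfc : (range m).inf (fun i => (S i)ᶜ) = ({σ | ∀ i, ¬ σ.Glued i} : Finset _) := by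
    ext σ; simp only [S, mem_inf, mem_compl, mem_filter, mem_univ, true_and]
    exact ⟨fun h i hi => h i (mem_range.2 (by obtain ⟨_, _⟩ := hi; omega)) hi,
      fun h i _ => h i⟩
  have hterm (t) (ht : t ∈ (range m).powerset) :
      #{σ : Perm (Fin (m + 1)) | (∀ i ∈ t, σ.Glued i) ∧ σ 0 = 0} = (m - #t)! := by
    rw [← card_fixing_zero_glued t m (mem_powerset.mp ht), Nat.card_eq_fintype_card,
      Fintype.card_subtype]
    simp only [and_comm]
  have hincl := inclusion_exclusion_sum_inf_compl (range m) S
    (fun σ => if σ 0 = 0 then (1 : ℤ) else 0)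
  simp only [sum_boole, hinf, hinfc, filter_filter, zsmul_eq_mul, Int.cast_id] at hincl
  rw [← Nat.cast_inj (R := ℤ), numDerangements_sum, Nat.card_eq_fintype_card,
    Fintype.card_subtype]
  calc (#{σ : Perm (Fin (m + 1)) | σ 0 = 0 ∧ ∀ i, ¬ σ.Glued i} : ℤ)
      = ∑ t ∈ (range m).powerset, (-1) ^ #t * ((m - #t)! : ℤ) := by
        simp only [and_comm (a := _ = _)]
        rw [hincl]
        exact sum_congr rfl fun t ht => by rw [hterm t ht]
    _ = ∑ k ∈ range (m + 1), m.choose k • ((-1) ^ k * ((m - k)! : ℤ)) := by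
        rw [sum_powerset_apply_card (fun k => (-1 : ℤ) ^ k * ((m - k)! : ℤ)), card_range]
    _ = _ := sum_congr rfl fun k hk => by
        rw [nsmul_eq_mul, ← Nat.choose_mul_factorial_sub (Nat.lt_succ_iff.mp (mem_range.mp hk))]
        push_cast
        ring

theorem card_avoidsCyclicSucc_fixing_zero (m : ℕ) :
    Nat.card {σ : Perm (Fin (m + 1)) // σ.AvoidsCyclicSucc ∧ σ 0 = 0} = numDerangements m := by
  rw [← card_fixing_zero_not_glued]
  exact Nat.card_congr <| Equiv.subtypeEquivRight fun σ =>
    ⟨fun ⟨hC, h0⟩ => ⟨h0, (avoidsCyclicSucc_iff_forall_not_glued h0).1 hC⟩,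
      fun ⟨h0, hG⟩ => ⟨(avoidsCyclicSucc_iff_forall_not_glued h0).2 hG, h0⟩⟩

theorem card_avoidsCyclicSucc_apply_zero (c : Fin (m + 1)) :
    Nat.card {σ : Perm (Fin (m + 1)) // σ.AvoidsCyclicSucc ∧ σ 0 = c} = numDerangements m := by
  rw [← card_avoidsCyclicSucc_fixing_zero]
  exact Nat.card_congr <| (Equiv.mulLeft (Equiv.subRight c)).subtypeEquiv fun σ => by
    simp [subRight_mul_avoidsCyclicSucc_iff, Perm.mul_apply, sub_eq_zero]

theorem card_avoidsSucc_containsN1_apply_zero (j : Fin (m + 1)) :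
    Nat.card {σ : Perm (Fin (m + 2)) //
        avoidsSucc (m + 2) σ ∧ containsN1 (m + 2) σ ∧ σ 0 = j.succ} =
      Nat.card {τ : Perm (Fin (m + 1)) // τ.AvoidsCyclicSucc ∧ τ 0 = j} := by
  refine card_eq_of_position 0 (fun τ => (τ.symm (Fin.last m)).succ) fun σ => ?_
  have hpos : σ.FollowedBy (Fin.last (m + 1)) 0 ↔
      σ.symm 0 = ((σ.deleteLetter 0).symm (Fin.last m)).succ := by
    rw [← followedBy_succAbove_iff, Fin.succAbove_zero, Fin.succ_last]
  have hfirst (hp : σ.symm 0 = ((σ.deleteLetter 0).symm (Fin.last m)).succ) :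
      σ 0 = j.succ ↔ σ.deleteLetter 0 0 = j := by
    rw [apply_zero_eq_succAbove_deleteLetter (hp ▸ Fin.succ_ne_zero _), Fin.succAbove_zero,
      Fin.succ_inj]
  rw [containsN1_iff, hpos]
  exact ⟨fun ⟨hA, hp, h0⟩ => ⟨hp,
      (avoidsSucc_iff_avoidsCyclicSucc_deleteLetter (hpos.2 hp)).1 hA, (hfirst hp).1 h0⟩,
    fun ⟨hp, hC, h0⟩ =>
      ⟨(avoidsSucc_iff_avoidsCyclicSucc_deleteLetter (hpos.2 hp)).2 hC, hp, (hfirst hp).2 h0⟩⟩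

end Equiv.Perm

theorem stmt_16 (n : ℕ) (hn : 2 ≤ n) (j : Fin n) (hj : 1 ≤ j.val) :
    Nat.card {σ : Equiv.Perm (Fin n) //
        avoidsSucc n σ ∧ containsN1 n σ ∧ σ ⟨0, by omega⟩ = j} =
      numDerangements (n - 2) := by
  obtain ⟨m, rfl⟩ : ∃ m, n = m + 2 := ⟨n - 2, by omega⟩
  obtain ⟨j, rfl⟩ := Fin.exists_succ_eq.2 (Fin.pos_iff_ne_zero.mp hj)
  rw [Fin.zero_eta, Equiv.Perm.card_avoidsSucc_containsN1_apply_zero,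
    Equiv.Perm.card_avoidsCyclicSucc_apply_zero, Nat.add_sub_cancel]
end

section
/- For every integer n ≥ 4, the arrangements of {1,…,n} avoiding all patterns 12, 23, …, (n−1)n are NOT equidistributed: there exist first digits j, j′ ∈ {1,…,n} such that the number of such arrangements with σ(1) = j differs from the number with σ(1) = j′. -/
section

variable {n : ℕ}

lemma val_finRotate (i : Fin n) :
    (finRotate n i : ℕ) = if (i : ℕ) = n - 1 then 0 else (i : ℕ) + 1 := by
  obtain ⟨m, rfl⟩ := Nat.exists_eq_succ_of_ne_zero i.pos.ne'
  rw [coe_finRotate]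
  simp only [Fin.ext_iff, Fin.val_last, Nat.succ_sub_one]

lemma not_containsN1_of_apply_zero (hn : 0 < n) {σ : Equiv.Perm (Fin n)}
    (h0 : σ ⟨0, hn⟩ = ⟨0, hn⟩) : ¬ containsN1 n σ := by
  rintro ⟨k, hk, -, hk0⟩
  have := σ.injective ((Fin.ext hk0).trans h0.symm)
  simp [Fin.ext_iff] at this

lemma avoidsSucc_finRotate_mul {σ : Equiv.Perm (Fin n)} (hσ : avoidsSucc n σ)
    (hN1 : ¬ containsN1 n σ) : avoidsSucc n (finRotate n * σ) := by
  intro k hk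
  have hsucc := hσ k hk
  have hnot : ¬ (_ ∧ _) := fun h => hN1 ⟨k, hk, h⟩
  simp only [Equiv.Perm.mul_apply, val_finRotate]
  split_ifs <;> omega

/-- The arrangement `2, n, 1, n-1, n-2, …, 3` (values shifted down by one). -/
noncomputable def twoNOneArrangement (n : ℕ) (hn : 2 < n) : Equiv.Perm (Fin n) :=
  Equiv.ofBijective
    (fun k => ⟨if (k : ℕ) = 0 then 1 else if (k : ℕ) = 1 then n - 1
      else if (k : ℕ) = 2 then 0 else n + 1 - k, by split_ifs <;> omega⟩)
    (Finite.injective_iff_bijective.mp fun a b h => by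
      simp only [Fin.mk.injEq] at h
      ext
      split_ifs at h <;> omega)

lemma val_twoNOneArrangement (hn : 2 < n) (k : Fin n) :
    (twoNOneArrangement n hn k : ℕ) = if (k : ℕ) = 0 then 1 else if (k : ℕ) = 1 then n - 1
      else if (k : ℕ) = 2 then 0 else n + 1 - k :=
  rfl

lemma avoidsSucc_twoNOneArrangement (hn : 2 < n) (h3 : n ≠ 3) :
    avoidsSucc n (twoNOneArrangement n hn) := by
  intro k hk
  rw [val_twoNOneArrangement, val_twoNOneArrangement]
  grind

lemma not_avoidsSucc_of_finRotate_mul_eq (hn : 2 < n) {σ : Equiv.Perm (Fin n)}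
    (h : finRotate n * σ = twoNOneArrangement n hn) : ¬ avoidsSucc n σ := by
  have h1 := congrArg (fun τ : Equiv.Perm (Fin n) => (τ ⟨1, by omega⟩ : ℕ)) h
  have h2 := congrArg (fun τ : Equiv.Perm (Fin n) => (τ ⟨2, hn⟩ : ℕ)) h
  simp only [Equiv.Perm.mul_apply, val_finRotate, val_twoNOneArrangement] at h1 h2
  intro hσ
  have : (σ ⟨2, hn⟩ : ℕ) ≠ σ ⟨1, by omega⟩ + 1 := hσ 1 hn
  split_ifs at h1 h2 <;> omega

lemma card_avoidsSucc_startsWith_zero_lt_one (hn : 2 < n) (h3 : n ≠ 3) :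
    Nat.card {σ : Equiv.Perm (Fin n) // avoidsSucc n σ ∧ σ ⟨0, by omega⟩ = ⟨0, by omega⟩} <
      Nat.card {σ : Equiv.Perm (Fin n) // avoidsSucc n σ ∧ σ ⟨0, by omega⟩ = ⟨1, by omega⟩} := by
  rw [← Set.coe_ofPred, ← Set.coe_ofPred, Nat.card_coe_set_eq, Nat.card_coe_set_eq,
    ← Set.ncard_image_of_injective _ (mul_right_injective (finRotate n))]
  refine Set.ncard_lt_ncard ⟨?_, fun hsub => ?_⟩
  · rintro _ ⟨σ, ⟨hσ, h0⟩, rfl⟩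
    refine ⟨avoidsSucc_finRotate_mul hσ (not_containsN1_of_apply_zero _ h0), ?_⟩
    ext
    rw [Equiv.Perm.mul_apply, h0, val_finRotate, if_neg (show 0 ≠ n - 1 by omega)]
  · obtain ⟨σ, ⟨hσ, -⟩, hrot⟩ := hsub
      ⟨avoidsSucc_twoNOneArrangement hn h3, Fin.ext (val_twoNOneArrangement hn _)⟩
    exact not_avoidsSucc_of_finRotate_mul_eq hn hrot hσ

end

theorem stmt_17 (n : ℕ) (hn : 4 ≤ n) :
    ∃ j j' : Fin n,
      Nat.card {σ : Equiv.Perm (Fin n) // avoidsSucc n σ ∧ σ ⟨0, by omega⟩ = j} ≠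
      Nat.card {σ : Equiv.Perm (Fin n) // avoidsSucc n σ ∧ σ ⟨0, by omega⟩ = j'} :=
  ⟨_, _, (card_avoidsSucc_startsWith_zero_lt_one (by omega) (by omega)).ne⟩
end

section
/- For every integer n ≥ 2, n−1 divides the number of arrangements of {1,…,n} that avoid all patterns 12, 23, …, (n−1)n but contain the pattern n1. -/
/-!
Glue the adjacent pair `n 1` of such an arrangement into the single letter `n` and lower every
letter by one. This is a bijection onto the arrangements of `{1,…,n-1}` without a cyclic
succession, where `(n-1) 1` counts as one as well: the letter after `1` was not `2`, so the letter
after the glued `n-1` is not `1`. Adding a constant modulo `n-1` to every letter preserves cyclic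
successions, and these translations act freely, so `n-1` divides the count.
-/

open Equiv

section Insertion

variable {n : ℕ}

def insertZero (p : Fin (n + 1)) (w : Perm (Fin n)) : Perm (Fin (n + 1)) :=
  (finSuccEquiv' p).trans (w.optionCongr.trans (finSuccEquiv n).symm)

@[simp] lemma insertZero_apply_self (p : Fin (n + 1)) (w : Perm (Fin n)) :
    insertZero p w p = 0 := by
  simp [insertZero]

@[simp] lemma insertZero_apply_succAbove (p : Fin (n + 1)) (w : Perm (Fin n)) (j : Fin n) :
    insertZero p w (p.succAbove j) = (w j).succ := by
  simp [insertZero]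

@[simp] lemma insertZero_symm_zero (p : Fin (n + 1)) (w : Perm (Fin n)) :
    (insertZero p w).symm 0 = p := by
  rw [symm_apply_eq, insertZero_apply_self]

def removeZero (σ : Perm (Fin (n + 1))) : Perm (Fin n) :=
  removeNone ((finSuccEquiv' (σ.symm 0)).symm.trans (σ.trans (finSuccEquiv n)))

lemma succ_removeZero_apply (σ : Perm (Fin (n + 1))) (j : Fin n) :
    (removeZero σ j).succ = σ ((σ.symm 0).succAbove j) := by
  obtain ⟨k, hk⟩ : ∃ k : Fin n, k.succ = σ ((σ.symm 0).succAbove j) := by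
    rw [Fin.exists_succ_eq, Ne, ← eq_symm_apply]
    exact Fin.succAbove_ne _ _
  have he : ((finSuccEquiv' (σ.symm 0)).symm.trans (σ.trans (finSuccEquiv n))) (some j) =
      some k := by
    simp [← hk]
  rw [← hk, Fin.succ_inj, removeZero, ← Option.some_inj, removeNone_some _ ⟨k, he⟩, he]

def insertZeroEquiv (n : ℕ) : Fin (n + 1) × Perm (Fin n) ≃ Perm (Fin (n + 1)) where
  toFun x := insertZero x.1 x.2
  invFun σ := (σ.symm 0, removeZero σ)
  left_inv := by
    rintro ⟨p, w⟩
    refine Prod.ext (insertZero_symm_zero p w) (Equiv.ext fun j => ?_)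
    rw [← Fin.succ_inj, succ_removeZero_apply]
    simp
  right_inv σ := by
    ext1 x
    rcases (σ.symm 0).eq_self_or_eq_succAbove x with rfl | ⟨j, rfl⟩
    · simp
    · simp [succ_removeZero_apply]

lemma avoidsSucc_iff_s19 (σ : Perm (Fin (n + 1))) :
    avoidsSucc (n + 1) σ ↔ ∀ k : Fin n, (σ k.succ : ℕ) ≠ σ k.castSucc + 1 :=
  ⟨fun h k => h k (by omega), fun h k hk => h ⟨k, by omega⟩⟩

lemma containsN1_iff (σ : Perm (Fin (n + 1))) :
    containsN1 (n + 1) σ ↔ ∃ k : Fin n, σ k.castSucc = Fin.last n ∧ σ k.succ = 0 := by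
  simp only [containsN1, Fin.ext_iff, Fin.val_last, Fin.val_zero, add_tsub_cancel_right]
  exact ⟨fun ⟨k, hk, h⟩ => ⟨⟨k, by omega⟩, h⟩, fun ⟨k, h⟩ => ⟨k, by omega, h⟩⟩

end Insertion

section Gluing

variable {m : ℕ}

lemma Fin.succAbove_adjacent_of_ne (p : Fin (m + 2)) (j : Fin m) (hj : j.succ.castSucc ≠ p) :
    ∃ k : Fin (m + 1), p.succAbove j.castSucc = k.castSucc ∧ p.succAbove j.succ = k.succ := by
  simp only [ne_eq, Fin.ext_iff, Fin.val_castSucc, Fin.val_succ] at hj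
  rcases lt_or_gt_of_ne hj with h | h
  · refine ⟨j.castSucc, ?_, ?_⟩ <;> simp only [Fin.succAbove, Fin.lt_def] <;> split_ifs <;>
      simp only [Fin.ext_iff, Fin.val_castSucc, Fin.val_succ] at * <;> omega
  · refine ⟨j.succ, ?_, ?_⟩ <;> simp only [Fin.succAbove, Fin.lt_def] <;> split_ifs <;>
      simp only [Fin.ext_iff, Fin.val_castSucc, Fin.val_succ] at * <;> omega

lemma Fin.exists_succAbove_adjacent (p : Fin (m + 2)) (k : Fin (m + 1))
    (h₁ : k.castSucc ≠ p) (h₂ : k.succ ≠ p) :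
    ∃ j : Fin m, p.succAbove j.castSucc = k.castSucc ∧ p.succAbove j.succ = k.succ := by
  simp only [ne_eq, Fin.ext_iff, Fin.val_castSucc, Fin.val_succ] at h₁ h₂
  rcases lt_or_gt_of_ne h₁ with h | h
  · refine ⟨⟨k, by omega⟩, ?_, ?_⟩ <;> simp only [Fin.succAbove, Fin.lt_def] <;> split_ifs <;>
      simp only [Fin.ext_iff, Fin.val_castSucc, Fin.val_succ] at * <;> omega
  · refine ⟨⟨k - 1, by omega⟩, ?_, ?_⟩ <;> simp only [Fin.succAbove, Fin.lt_def] <;> split_ifs <;>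
      simp only [Fin.ext_iff, Fin.val_castSucc, Fin.val_succ] at * <;> omega

/-- `+ 1` is computed in `Fin (m + 1)`, so the pair `m 0` counts as a succession too. -/
def cyclicAvoidsSucc (w : Perm (Fin (m + 1))) : Prop :=
  ∀ k : Fin m, w k.succ ≠ w k.castSucc + 1

lemma containsN1_insertZero_iff (p : Fin (m + 2)) (w : Perm (Fin (m + 1))) :
    containsN1 (m + 2) (insertZero p w) ↔ p = (w.symm (Fin.last m)).succ := by
  rw [containsN1_iff]
  constructor
  · rintro ⟨k, hlast, hzero⟩
    obtain rfl : k.succ = p := by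
      rw [← insertZero_symm_zero p w, eq_symm_apply, hzero]
    rw [← Fin.succAbove_succ_self, insertZero_apply_succAbove, ← Fin.succ_last,
      Fin.succ_inj] at hlast
    rw [← hlast, symm_apply_apply]
  · rintro rfl
    refine ⟨w.symm (Fin.last m), ?_, insertZero_apply_self _ _⟩
    rw [← Fin.succAbove_succ_self, insertZero_apply_succAbove, apply_symm_apply, Fin.succ_last]

lemma avoidsSucc_insertZero_iff {q : Fin (m + 1)} {w : Perm (Fin (m + 1))}
    (hq : w q = Fin.last m) :
    avoidsSucc (m + 2) (insertZero q.succ w) ↔ cyclicAvoidsSucc w := by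
  rw [avoidsSucc_iff_s19]
  constructor
  · intro h j hj
    by_cases hjq : j.castSucc = q
    · subst hjq
      rw [hq, Fin.last_add_one] at hj
      apply h j.succ
      rw [← Fin.succAbove_castSucc_self j.succ, ← Fin.succ_castSucc, insertZero_apply_succAbove,
        insertZero_apply_self, hj]
      simp
    · obtain ⟨k, h₁, h₂⟩ := Fin.succAbove_adjacent_of_ne q.succ j
        (by rwa [← Fin.succ_castSucc, Ne, Fin.succ_inj])
      have hlast : w j.castSucc ≠ Fin.last m := by
        rw [← hq]
        exact w.injective.ne hjq
      apply h k
      rw [← h₁, ← h₂, insertZero_apply_succAbove, insertZero_apply_succAbove, Fin.val_succ,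
        Fin.val_succ, hj, Fin.val_add_one_of_lt (Fin.lt_last_iff_ne_last.mpr hlast)]
  · intro h k hk
    by_cases hk₁ : k.succ = q.succ
    · rw [hk₁, insertZero_apply_self] at hk
      simp at hk
    by_cases hk₂ : k.castSucc = q.succ
    · obtain ⟨j, rfl⟩ : ∃ j : Fin m, j.succ = k := by
        rw [Fin.exists_succ_eq]
        rintro rfl
        exact Fin.succ_ne_zero q hk₂.symm
      obtain rfl : j.castSucc = q := by rwa [← Fin.succ_castSucc, Fin.succ_inj] at hk₂
      rw [← Fin.succAbove_castSucc_self j.succ, ← Fin.succ_castSucc, insertZero_apply_succAbove,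
        insertZero_apply_self, Fin.val_succ, Fin.val_zero, Nat.add_right_cancel_iff] at hk
      apply h j
      rw [hq, Fin.last_add_one]
      exact Fin.ext hk
    · obtain ⟨j, h₁, h₂⟩ := Fin.exists_succAbove_adjacent q.succ k hk₂ hk₁
      rw [← h₁, ← h₂, insertZero_apply_succAbove, insertZero_apply_succAbove, Fin.val_succ,
        Fin.val_succ] at hk
      apply h j
      rw [Fin.ext_iff, Fin.val_add_one]
      split_ifs with hlast
      · rw [hlast, Fin.val_last] at hk
        omega
      · omega

theorem card_avoidsSucc_containsN1 (m : ℕ) :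
    Nat.card {σ : Perm (Fin (m + 2)) // avoidsSucc (m + 2) σ ∧ containsN1 (m + 2) σ} =
      Nat.card {w : Perm (Fin (m + 1)) // cyclicAvoidsSucc w} := by
  symm
  refine Nat.card_congr (Equiv.ofBijective
    (fun w => ⟨insertZero (w.1.symm (Fin.last m)).succ w.1,
      (avoidsSucc_insertZero_iff (apply_symm_apply _ _)).2 w.2,
      (containsN1_insertZero_iff _ _).2 rfl⟩) ⟨fun w w' h => ?_, fun σ => ?_⟩)
  · exact Subtype.ext (congrArg Prod.snd ((insertZeroEquiv (m + 1)).injective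
      (a₁ := (_, w.1)) (a₂ := (_, w'.1)) (congrArg Subtype.val h)))
  · obtain ⟨σ, hA, hC⟩ := σ
    obtain ⟨⟨p, w⟩, rfl⟩ := (insertZeroEquiv (m + 1)).surjective σ
    obtain rfl := (containsN1_insertZero_iff p w).1 hC
    exact ⟨⟨w, (avoidsSucc_insertZero_iff (apply_symm_apply _ _)).1 hA⟩, rfl⟩

lemma cyclicAvoidsSucc_trans_addRight (w : Perm (Fin (m + 1))) (c : Fin (m + 1))
    (hw : cyclicAvoidsSucc w) : cyclicAvoidsSucc (w.trans (Equiv.addRight c)) := by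
  intro k
  simpa [add_right_comm _ c 1] using hw k

end Gluing

section Translation

variable {α G : Type*} [AddGroup G] {P : (α ≃ G) → Prop}

def subtypeEquivProdNormalized (a : α) (hP : ∀ e c, P e → P (e.trans (Equiv.addRight c))) :
    {e // P e} ≃ G × {e // P e ∧ e a = 0} where
  toFun e := (e.1 a, ⟨e.1.trans (Equiv.addRight (-e.1 a)), hP _ _ e.2, by simp⟩)
  invFun x := ⟨x.2.1.trans (Equiv.addRight x.1), hP _ _ x.2.2.1⟩
  left_inv e := by ext; simp
  right_inv := by
    rintro ⟨c, e, he, hea⟩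
    ext <;> simp [hea]

lemma card_dvd_card_of_addRight_invariant (a : α)
    (hP : ∀ e c, P e → P (e.trans (Equiv.addRight c))) :
    Nat.card G ∣ Nat.card {e // P e} := by
  rw [Nat.card_congr (subtypeEquivProdNormalized a hP), Nat.card_prod]
  exact dvd_mul_right _ _

end Translation

theorem stmt_19 (n : ℕ) (hn : 2 ≤ n) :
    (n - 1) ∣ Nat.card {σ : Equiv.Perm (Fin n) // avoidsSucc n σ ∧ containsN1 n σ} := by
  obtain ⟨m, rfl⟩ : ∃ m, n = m + 2 := ⟨n - 2, by omega⟩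
  rw [card_avoidsSucc_containsN1, show m + 2 - 1 = Nat.card (Fin (m + 1)) by simp]
  exact card_dvd_card_of_addRight_invariant 0 cyclicAvoidsSucc_trans_addRight
end
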